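/- arXiv:1705.09485 — 8 statements merged into one kernel-verified Lean document; each statement's English description precedes it below -/
import Mathlib

section
/- Let $\theta \ge 0$ be real, let $n \ge 1$ and $1 \le r \le n$ be integers, and let $t \ge 0$. Then $\sum_{l=r}^{n} \frac{l!}{(l-r)!}\, q^{\theta}_{n,l}(t) = \sum_{k=r}^{n} e^{-k(k+\theta-1)t/2}\,(2k+\theta-1)\,\binom{k-1}{r-1}\,(\theta+k)^{(r-1)}\,\frac{n^{[k]}}{(n+\theta)^{(k)}}$. (These are the $r$-th falling factorial moments $\mathbb{E}[A_n^{\theta}(t)_{[r]}]$ of the number of ancestral lineages.) -/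
open Finset

/-- Rising factorial `x^{(m)} = x (x+1) ⋯ (x+m-1)` of a real number. -/
noncomputable def risingFac (x : ℝ) (m : ℕ) : ℝ := ∏ i ∈ Finset.range m, (x + i)

/-- Falling factorial `n^{[j]} = n (n-1) ⋯ (n-j+1)` of a natural number, as a real. -/
noncomputable def fallingFac (n : ℕ) (j : ℕ) : ℝ := ∏ i ∈ Finset.range j, ((n : ℝ) - i)

/-- `q θ n k t = P(A_n^θ(t) = k)`. -/
noncomputable def q (θ : ℝ) (n k : ℕ) (t : ℝ) : ℝ :=
  ∑ j ∈ Finset.Icc k n,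
    Real.exp (-(j * (j + θ - 1) * t) / 2) * (-1 : ℝ) ^ (j - k) *
      ((2 * j + θ - 1) * risingFac (k + θ) (j - 1)) /
        ((Nat.factorial k : ℝ) * (Nat.factorial (j - k) : ℝ)) *
      (fallingFac n j / risingFac (n + θ) j)

/-! Expanding `q` and exchanging the two sums, the coefficient of `e^{-j(j+θ-1)t/2}` becomes the
alternating sum `∑_l (-1)^{j-l} (l+θ)^{(j-1)} / ((l-r)! (j-l)!)`, which is `1/(j-r)!` times the
`(j-r)`-th forward difference of `x ↦ x^{(j-1)}` at `x = r+θ`. Since `Δ x^{(d)} = d (x+1)^{(d-1)}`,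
that difference is `(j-1)^{[j-r]} (θ+j)^{(r-1)}`, and `(j-1)^{[j-r]} / (j-r)! = C(j-1, r-1)`. -/

open scoped Nat fwdDiff

lemma risingFac_succ (x : ℝ) (m : ℕ) : risingFac x (m + 1) = risingFac x m * (x + m) :=
  prod_range_succ _ _

lemma risingFac_succ_eq_mul (x : ℝ) (m : ℕ) :
    risingFac x (m + 1) = x * risingFac (x + 1) m := by
  simp only [risingFac, prod_range_succ', Nat.cast_succ, Nat.cast_zero, add_zero, add_assoc,
    add_comm (1 : ℝ), mul_comm x]

lemma fwdDiff_risingFac (m : ℕ) (x : ℝ) :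
    Δ_[1] (fun y => risingFac y (m + 1)) x = (m + 1) * risingFac (x + 1) m := by
  rw [fwdDiff, risingFac_succ, risingFac_succ_eq_mul]
  ring

lemma fwdDiff_iter_risingFac {d M : ℕ} (hM : M ≤ d) (x : ℝ) :
    Δ_[1] ^[M] (fun y => risingFac y d) x = d.descFactorial M * risingFac (x + M) (d - M) := by
  induction M generalizing x with
  | zero => simp
  | succ M ih =>
    obtain ⟨e, he⟩ : ∃ e, d - M = e + 1 := ⟨d - M - 1, by omega⟩
    have hstep := fwdDiff_risingFac e (x + M)
    rw [fwdDiff] at hstep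
    rw [Function.iterate_succ_apply', fwdDiff, ih (by omega), ih (by omega), Nat.descFactorial_succ,
      he, show d - (M + 1) = e by omega, show x + 1 + M = x + M + 1 by ring, ← mul_sub, hstep]
    push_cast
    rw [← add_assoc]
    ring

lemma sum_alternating_risingFac_div {d M : ℕ} (hM : M ≤ d) (x : ℝ) :
    ∑ k ∈ range (M + 1), (-1) ^ (M - k) * risingFac (x + k) d / (k ! * (M - k)!)
      = d.choose M * risingFac (x + M) (d - M) := by
  have hdiff := fwdDiff_iter_eq_sum_shift 1 (fun y => risingFac y d) M x
  rw [fwdDiff_iter_risingFac hM, Nat.descFactorial_eq_factorial_mul_choose] at hdiff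
  have hM0 : (M ! : ℝ) ≠ 0 := by positivity
  calc ∑ k ∈ range (M + 1), (-1) ^ (M - k) * risingFac (x + k) d / (k ! * (M - k)!)
      = (M ! : ℝ)⁻¹ * ∑ k ∈ range (M + 1),
          ((-1 : ℤ) ^ (M - k) * M.choose k) • risingFac (x + k • (1 : ℝ)) d := by
        rw [mul_sum]
        refine sum_congr rfl fun k hk => ?_
        rw [zsmul_eq_mul, nsmul_one]
        push_cast
        rw [Nat.cast_choose ℝ (Nat.lt_succ_iff.1 (mem_range.1 hk))]
        field_simp
    _ = d.choose M * risingFac (x + M) (d - M) := by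
        rw [← hdiff]
        push_cast
        field_simp

lemma sum_Icc_alternating_risingFac_div {r j : ℕ} (hr : 1 ≤ r) (hrj : r ≤ j) (x : ℝ) :
    ∑ l ∈ Icc r j, (-1) ^ (j - l) * risingFac (l + x) (j - 1) / ((l - r)! * (j - l)!)
      = (j - 1).choose (r - 1) * risingFac (x + j) (r - 1) := by
  have hsum := sum_alternating_risingFac_div (show j - r ≤ j - 1 by omega) (r + x)
  rw [← Nat.choose_symm (by omega), show j - 1 - (j - r) = r - 1 by omega,
    Nat.cast_sub hrj, show r + x + (j - r : ℝ) = x + j by ring] at hsum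
  rw [← hsum, ← Ico_add_one_right_eq_Icc, sum_Ico_eq_sum_range, show j + 1 - r = j - r + 1 by omega]
  refine sum_congr rfl fun k _ => ?_
  rw [Nat.add_sub_cancel_left, show j - (r + k) = j - r - k by omega]
  push_cast
  rw [add_right_comm]

theorem stmt_2_general (θ : ℝ) (n r : ℕ) (hr : 1 ≤ r) (t : ℝ) :
    ∑ l ∈ Finset.Icc r n, ((Nat.factorial l : ℝ) / (Nat.factorial (l - r) : ℝ)) * q θ n l t
      = ∑ k ∈ Finset.Icc r n,
          Real.exp (-(k * (k + θ - 1) * t) / 2) * (2 * k + θ - 1) *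
            (Nat.choose (k - 1) (r - 1) : ℝ) * risingFac (θ + k) (r - 1) *
            (fallingFac n k / risingFac (n + θ) k) := by
  simp only [q, mul_sum]
  rw [sum_comm' (t' := Icc r n) (s' := fun j => Icc r j)
    (fun l j => by simp only [mem_Icc]; omega)]
  refine sum_congr rfl fun j hj => ?_
  set c := Real.exp (-(j * (j + θ - 1) * t) / 2) * (2 * j + θ - 1) *
    (fallingFac n j / risingFac (n + θ) j) with hc
  calc _ = c * ∑ l ∈ Icc r j,
        (-1) ^ (j - l) * risingFac (l + θ) (j - 1) / ((l - r)! * (j - l)!) := by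
        rw [mul_sum]
        refine sum_congr rfl fun l _ => ?_
        rw [hc]
        field_simp
    _ = _ := by
        rw [sum_Icc_alternating_risingFac_div hr (mem_Icc.1 hj).1]
        ring

/-- The `r`-th falling factorial moment of the number of ancestral lineages:
`∑_{l=r}^n l!/(l-r)! q^θ_{n,l}(t)
  = ∑_{k=r}^n e^{-k(k+θ-1)t/2} (2k+θ-1) C(k-1,r-1) (θ+k)^{(r-1)} n^{[k]}/(n+θ)^{(k)}`. -/
theorem stmt_2 (θ : ℝ) (hθ : 0 ≤ θ) (n r : ℕ) (hn : 1 ≤ n) (hr : 1 ≤ r) (hrn : r ≤ n)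
    (t : ℝ) (ht : 0 ≤ t) :
    ∑ l ∈ Finset.Icc r n, ((Nat.factorial l : ℝ) / (Nat.factorial (l - r) : ℝ)) * q θ n l t
      = ∑ k ∈ Finset.Icc r n,
          Real.exp (-(k * (k + θ - 1) * t) / 2) * (2 * k + θ - 1) *
            (Nat.choose (k - 1) (r - 1) : ℝ) * risingFac (θ + k) (r - 1) *
            (fallingFac n k / risingFac (n + θ) k) :=
  stmt_2_general θ n r hr t
end

section
/- For every real $\theta > 0$ and integers $n \ge 2$ and $k \ge 0$, $(n-1)\int_0^1 (1-x)^{n-2}\, x^{\theta}\, \frac{(-\theta \log x)^k}{k!}\, dx = \frac{n-1}{\theta}\sum_{l=1}^{n-1} (-1)^{l-1}\binom{n-2}{l-1}\left(\frac{\theta}{l+\theta}\right)^{k+1}$. (Both sides equal $\mathbb{P}(S_n = k)$, the probability of $k$ segregating sites in a stationary sample of size $n$; the left side exhibits it as a Poisson mixture with mean $-\theta \log X$ where $X$ has density $(n-1)(1-x)^{n-2}$ on $(0,1)$.) -/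
/-!
Substituting `x = exp (-t)` turns `∫₀¹ x^(s-1) (-log x)^k dx` into the Gamma integral
`∫₀^∞ t^k e^(-s t) dt = k! / s^(k+1)`. Expanding `(1 - x)^(n-2)` binomially therefore writes the
left-hand side as a finite alternating sum of such integrals with `s = j + θ + 1`, and the index
shift `l = j + 1` gives the right-hand side.
-/

open Finset Real MeasureTheory Set
open scoped Nat

theorem image_exp_neg_Ioi (a : ℝ) : (fun t ↦ exp (-t)) '' Ioi a = Ioo 0 (exp (-a)) := by
  rw [show (fun t ↦ exp (-t)) = exp ∘ Neg.neg from rfl, image_comp, image_neg_Ioi, image_exp_Iio]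

theorem integral_comp_exp_neg_Ioi {E : Type*} [NormedAddCommGroup E] [NormedSpace ℝ E]
    (g : ℝ → E) (a : ℝ) :
    ∫ t in Ioi a, exp (-t) • g (exp (-t)) = ∫ x in Ioo 0 (exp (-a)), g x := by
  symm
  rw [← image_exp_neg_Ioi]
  simpa [abs_of_pos (exp_pos _)] using integral_image_eq_integral_abs_deriv_smul
    measurableSet_Ioi (fun t _ ↦ ((hasDerivAt_exp (-t)).comp t (hasDerivAt_neg t)).hasDerivWithinAt)
    (exp_injective.comp neg_injective).injOn g

theorem integral_pow_mul_exp_neg_mul_Ioi {c : ℝ} (hc : 0 < c) (k : ℕ) :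
    ∫ t in Ioi 0, t ^ k * exp (-(c * t)) = k ! / c ^ (k + 1) := by
  have h := integral_rpow_mul_exp_neg_mul_Ioi (a := k + 1) (by positivity) hc
  simp only [add_sub_cancel_right, rpow_natCast, Gamma_nat_eq_factorial] at h
  rw [h, ← Nat.cast_succ, rpow_natCast, one_div, inv_pow, inv_mul_eq_div]

theorem integral_rpow_mul_neg_log_pow_Ioo {s : ℝ} (hs : 0 < s) (k : ℕ) :
    ∫ x in Ioo 0 1, x ^ (s - 1) * (-log x) ^ k = k ! / s ^ (k + 1) := by
  have h := integral_comp_exp_neg_Ioi (fun x ↦ x ^ (s - 1) * (-log x) ^ k) 0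
  rw [neg_zero, exp_zero] at h
  rw [← h, ← integral_pow_mul_exp_neg_mul_Ioi hs]
  refine setIntegral_congr_fun measurableSet_Ioi fun t _ ↦ ?_
  rw [smul_eq_mul, log_exp, neg_neg, ← exp_mul, show -(s * t) = -t + -t * (s - 1) by ring,
    exp_add]
  ring

theorem integrableOn_rpow_mul_neg_log_pow_Ioo {s : ℝ} (hs : 0 < s) (k : ℕ) :
    IntegrableOn (fun x ↦ x ^ (s - 1) * (-log x) ^ k) (Ioo 0 1) :=
  .of_integral_ne_zero (by rw [integral_rpow_mul_neg_log_pow_Ioo hs]; positivity)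

theorem integral_one_sub_pow_mul_rpow_mul_neg_log_pow_Ioo {s : ℝ} (hs : 0 < s) (m k : ℕ) :
    ∫ x in Ioo 0 1, (1 - x) ^ m * (x ^ (s - 1) * (-log x) ^ k)
      = k ! * ∑ j ∈ range (m + 1), (-1) ^ j * m.choose j / (j + s) ^ (k + 1) := by
  have hexpand : ∀ x ∈ Ioo (0 : ℝ) 1, (1 - x) ^ m * (x ^ (s - 1) * (-log x) ^ k)
      = ∑ j ∈ range (m + 1), (-1) ^ j * m.choose j * (x ^ (j + s - 1) * (-log x) ^ k) := by
    intro x hx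
    rw [sub_eq_add_neg, add_comm, add_pow, sum_mul]
    refine sum_congr rfl fun j _ ↦ ?_
    rw [add_sub_assoc, rpow_add hx.1, rpow_natCast, neg_pow, one_pow]
    ring
  have hpos (j : ℕ) : 0 < (j : ℝ) + s := by positivity
  rw [setIntegral_congr_fun measurableSet_Ioo hexpand, integral_finsetSum _ fun j _ ↦
    (integrableOn_rpow_mul_neg_log_pow_Ioo (hpos j) k).const_mul _, mul_sum]
  refine sum_congr rfl fun j _ ↦ ?_
  rw [integral_const_mul, integral_rpow_mul_neg_log_pow_Ioo (hpos j)]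
  ring

/-- The distribution of the number of segregating sites: the Poisson-mixture form
`(n-1)∫_0^1 (1-x)^{n-2} x^θ (-θ log x)^k / k! dx` equals
`((n-1)/θ) ∑_{l=1}^{n-1} (-1)^{l-1} C(n-2,l-1) (θ/(l+θ))^{k+1}`. -/
theorem stmt_4 (θ : ℝ) (hθ : 0 < θ) (n : ℕ) (hn : 2 ≤ n) (k : ℕ) :
    ((n : ℝ) - 1) * ∫ x in (0:ℝ)..1, (1 - x) ^ (n - 2) * x ^ θ * (-θ * Real.log x) ^ k /
        (Nat.factorial k : ℝ)
      = ((n : ℝ) - 1) / θ *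
          ∑ l ∈ Finset.Icc 1 (n - 1),
            (-1 : ℝ) ^ (l - 1) * (Nat.choose (n - 2) (l - 1) : ℝ) * (θ / (l + θ)) ^ (k + 1) := by
  obtain ⟨m, rfl⟩ : ∃ m, n = m + 2 := ⟨n - 2, by omega⟩
  have hintegrand : ∀ x ∈ Ioo (0 : ℝ) 1, (1 - x) ^ (m + 2 - 2) * x ^ θ * (-θ * log x) ^ k / k !
      = θ ^ k / k ! * ((1 - x) ^ m * (x ^ (θ + 1 - 1) * (-log x) ^ k)) := by
    intro x _
    rw [Nat.add_sub_cancel, add_sub_cancel_right]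
    ring
  rw [intervalIntegral.integral_of_le zero_le_one, integral_Ioc_eq_integral_Ioo,
    setIntegral_congr_fun measurableSet_Ioo hintegrand, integral_const_mul,
    integral_one_sub_pow_mul_rpow_mul_neg_log_pow_Ioo (by linarith), Nat.add_sub_cancel,
    show m + 2 - 1 = m + 1 by omega, ← Finset.Ico_add_one_right_eq_Icc, sum_Ico_eq_sum_range,
    Nat.add_sub_cancel]
  simp only [mul_sum]
  refine sum_congr rfl fun j _ ↦ ?_
  have hfac : (k ! : ℝ) ≠ 0 := by positivity
  push_cast
  rw [add_tsub_cancel_left, div_pow]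
  field_simp
  ring
end

section
/- Let $\theta > 0$ be real. Define $p_{\theta}(1,s) = 1$ if $s = 0$ and $0$ otherwise, and for integers $n \ge 2$, $s \ge 0$ define $p_{\theta}(n,s) = (n-1)\int_0^1 (1-x)^{n-2}\, x^{\theta}\, \frac{(-\theta\log x)^s}{s!}\, dx$. Then for all $n \ge 2$ and $s \ge 1$, $(n+\theta-1)\, p_{\theta}(n,s) = \theta\, p_{\theta}(n,s-1) + (n-1)\, p_{\theta}(n-1,s)$, and $(n+\theta-1)\, p_{\theta}(n,0) = (n-1)\, p_{\theta}(n-1,0)$. -/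
open Finset Real
open Set Filter Topology intervalIntegral

lemma tendsto_aux (θ : ℝ) (hθ : 0 < θ) (s : ℕ) :
    Tendsto (fun x : ℝ => x ^ θ * Real.log x ^ s) (𝓝[>] 0) (𝓝 0) := by
  rcases Nat.eq_zero_or_pos s with hs | hs
  · subst hs
    simp only [pow_zero, mul_one]
    have : Tendsto (fun x : ℝ => x ^ θ) (𝓝[>] 0) (𝓝 ((0:ℝ) ^ θ)) :=
      ((Real.continuousAt_rpow_const 0 θ (Or.inr hθ.le)).continuousWithinAt).tendsto
    simpa [Real.zero_rpow hθ.ne'] using this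
  · have hrs : 0 < θ / s := div_pos hθ (by exact_mod_cast hs)
    have h1 : Tendsto (fun x : ℝ => (Real.log x * x ^ (θ / s)) ^ s) (𝓝[>] 0) (𝓝 0) := by
      have := (tendsto_log_mul_rpow_nhdsGT_zero hrs).pow s
      simpa [zero_pow hs.ne'] using this
    refine h1.congr' ?_
    filter_upwards [self_mem_nhdsWithin] with x hx
    have hx0 : (0:ℝ) < x := hx
    rw [mul_pow, ← Real.rpow_natCast (x ^ (θ / s)) s, ← Real.rpow_mul hx0.le,
      div_mul_cancel₀]
    · ring
    · exact_mod_cast hs.ne'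

lemma contOn_aux (θ : ℝ) (hθ : 0 < θ) (s : ℕ) :
    ContinuousOn (fun x : ℝ => x ^ θ * Real.log x ^ s) (Icc 0 1) := by
  intro x hx
  rcases eq_or_lt_of_le hx.1 with h0 | h0
  · -- x = 0
    subst h0
    have hval : (0:ℝ) ^ θ * Real.log 0 ^ s = 0 := by
      simp [Real.zero_rpow hθ.ne']
    show Tendsto _ _ (𝓝 ((0:ℝ) ^ θ * Real.log 0 ^ s))
    rw [hval]
    have h2 : Tendsto (fun x : ℝ => x ^ θ * Real.log x ^ s) (𝓝[{0} ∪ Ioi 0] 0) (𝓝 0) := by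
      rw [nhdsWithin_union]
      rw [tendsto_sup]
      constructor
      · rw [nhdsWithin_singleton]
        have := tendsto_pure_nhds (fun x : ℝ => x ^ θ * Real.log x ^ s) 0
        rwa [hval] at this
      · exact tendsto_aux θ hθ s
    exact h2.mono_left (nhdsWithin_mono _ (fun y hy => by
      rcases eq_or_lt_of_le hy.1 with h | h
      · exact Or.inl h.symm
      · exact Or.inr h))
  · exact (ContinuousWithinAt.mul
      ((Real.continuousAt_rpow_const x θ (Or.inl h0.ne')).continuousWithinAt)
      (((Real.continuousAt_log h0.ne').pow s).continuousWithinAt))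

lemma contOn_f (p : ℝ) (hp : 0 < p) (c : ℝ) (m s : ℕ) :
    ContinuousOn (fun x : ℝ => (1 - x) ^ m * x ^ p * (c * Real.log x) ^ s / (Nat.factorial s : ℝ))
      (Icc 0 1) := by
  have h : ContinuousOn
      (fun x : ℝ => ((1 - x) ^ m * (x ^ p * Real.log x ^ s)) * (c ^ s / (Nat.factorial s : ℝ)))
      (Icc 0 1) :=
    (((continuousOn_const.sub continuousOn_id).pow m).mul (contOn_aux p hp s)).mul
      continuousOn_const
  refine h.congr fun x hx => ?_
  simp only [mul_pow]
  ring

lemma intInt_f (p : ℝ) (hp : 0 < p) (c : ℝ) (m s : ℕ) :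
    IntervalIntegrable
      (fun x : ℝ => (1 - x) ^ m * x ^ p * (c * Real.log x) ^ s / (Nat.factorial s : ℝ))
      MeasureTheory.volume 0 1 := by
  apply ContinuousOn.intervalIntegrable
  rw [Set.uIcc_of_le (zero_le_one)]
  exact contOn_f p hp c m s

noncomputable def segInt (θ : ℝ) (m s : ℕ) : ℝ :=
  ∫ x in (0:ℝ)..1, (1 - x) ^ m * x ^ θ * (-θ * Real.log x) ^ s / (Nat.factorial s : ℝ)

lemma key (θ : ℝ) (hθ : 0 < θ) (m s : ℕ) :
    ((m : ℝ) + θ + 1) * segInt θ m s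
      = (m : ℝ) * segInt θ (m - 1) s + (if 1 ≤ s then θ else 0) * segInt θ m (s - 1)
        + (if m = 0 ∧ s = 0 then 1 else 0) := by
  have hθ1 : (0:ℝ) < θ + 1 := by linarith
  set H : ℝ → ℝ := fun x => (1 - x) ^ m * x ^ (θ + 1) * ((-θ * Real.log x) ^ s / (Nat.factorial s : ℝ)) with hH
  set D : ℝ → ℝ := fun x =>
    ((m : ℝ) * (1 - x) ^ (m - 1) * (-1) * x ^ (θ + 1) + (1 - x) ^ m * ((θ + 1) * x ^ θ)) *
        ((-θ * Real.log x) ^ s / (Nat.factorial s : ℝ))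
      + (1 - x) ^ m * x ^ (θ + 1) *
        ((s : ℝ) * (-θ * Real.log x) ^ (s - 1) * (-θ * x⁻¹) / (Nat.factorial s : ℝ)) with hD
  set E : ℝ → ℝ := fun x =>
    (m : ℝ) * ((1 - x) ^ m * x ^ θ * (-θ * Real.log x) ^ s / (Nat.factorial s : ℝ))
      - (m : ℝ) * ((1 - x) ^ (m - 1) * x ^ θ * (-θ * Real.log x) ^ s / (Nat.factorial s : ℝ))
      + (θ + 1) * ((1 - x) ^ m * x ^ θ * (-θ * Real.log x) ^ s / (Nat.factorial s : ℝ))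
      - (if 1 ≤ s then θ else 0) *
          ((1 - x) ^ m * x ^ θ * (-θ * Real.log x) ^ (s - 1) / (Nat.factorial (s - 1) : ℝ)) with hE
  have hderiv : ∀ x ∈ Set.Ioo (0:ℝ) 1, HasDerivAt H (D x) x := by
    intro x hx
    have hx0 : (0:ℝ) < x := hx.1
    have h1 : HasDerivAt (fun y : ℝ => (1 - y) ^ m) ((m : ℝ) * (1 - x) ^ (m - 1) * (-1)) x :=
      ((hasDerivAt_id x).const_sub 1).pow m
    have h2 : HasDerivAt (fun y : ℝ => y ^ (θ + 1)) ((θ + 1) * x ^ θ) x := by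
      have := Real.hasDerivAt_rpow_const (x := x) (p := θ + 1) (Or.inl hx0.ne')
      simpa using this
    have h3 : HasDerivAt (fun y : ℝ => (-θ * Real.log y) ^ s / (Nat.factorial s : ℝ))
        ((s : ℝ) * (-θ * Real.log x) ^ (s - 1) * (-θ * x⁻¹) / (Nat.factorial s : ℝ)) x := by
      exact (((Real.hasDerivAt_log hx0.ne').const_mul (-θ)).pow s).div_const _
    exact (h1.mul h2).mul h3
  have hcont : ContinuousOn H (Icc 0 1) := by
    refine (contOn_f (θ + 1) hθ1 (-θ) m s).congr fun x hx => ?_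
    rw [hH]; ring
  have hfac : ∀ j : ℕ, ((Nat.factorial j : ℝ)) ≠ 0 :=
    fun j => Nat.cast_ne_zero.mpr (Nat.factorial_ne_zero j)
  have hEeq : Set.EqOn D E (Set.Icc 0 1) := by
    intro x hx
    rcases eq_or_lt_of_le hx.1 with h0 | h0
    · subst h0
      simp [hD, hE, Real.zero_rpow hθ.ne', Real.zero_rpow hθ1.ne']
    · have hx0 : x ≠ 0 := h0.ne'
      have hxp : x ^ (θ + 1) = x ^ θ * x := Real.rpow_add_one hx0 θ
      rw [hD, hE]
      simp only [hxp]
      rcases Nat.eq_zero_or_pos s with hs | hs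
      · subst hs
        simp only [Nat.cast_zero, if_neg (by norm_num : ¬ (1:ℕ) ≤ 0)]
        rcases Nat.eq_zero_or_pos m with hm | hm
        · subst hm; simp
        · obtain ⟨k, rfl⟩ : ∃ k, m = k + 1 := ⟨m - 1, by omega⟩
          simp only [Nat.add_sub_cancel]
          field_simp
          ring
      · obtain ⟨t, rfl⟩ : ∃ t, s = t + 1 := ⟨s - 1, by omega⟩
        simp only [if_pos (by omega : 1 ≤ t + 1), Nat.add_sub_cancel]
        push_cast [Nat.factorial_succ]
        rcases Nat.eq_zero_or_pos m with hm | hm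
        · subst hm
          simp only [Nat.cast_zero, pow_zero, Nat.zero_sub]
          field_simp
          ring
        · obtain ⟨k, rfl⟩ : ∃ k, m = k + 1 := ⟨m - 1, by omega⟩
          simp only [Nat.add_sub_cancel]
          field_simp
          ring
  have hH1 : H 1 = (if m = 0 ∧ s = 0 then 1 else 0) := by
    rw [hH]
    simp only [sub_self, Real.log_one, mul_zero, Real.one_rpow]
    rcases Nat.eq_zero_or_pos m with hm | hm
    · rcases Nat.eq_zero_or_pos s with hs | hs
      · subst hm; subst hs; simp
      · subst hm; rw [if_neg (fun h => hs.ne' h.2)]; simp [zero_pow hs.ne']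
    · rw [if_neg (fun h => hm.ne' h.1)]; simp [zero_pow hm.ne']
  have hH0 : H 0 = 0 := by
    rw [hH]
    simp [Real.zero_rpow hθ1.ne']
  have hint : IntervalIntegrable D MeasureTheory.volume 0 1 := by
    apply ContinuousOn.intervalIntegrable
    rw [Set.uIcc_of_le (zero_le_one)]
    refine ContinuousOn.congr ?_ hEeq
    rw [hE]
    exact ((((contOn_f θ hθ (-θ) m s).const_smul ((m:ℝ))).sub
        ((contOn_f θ hθ (-θ) (m-1) s).const_smul ((m:ℝ)))).add
        ((contOn_f θ hθ (-θ) m s).const_smul (θ+1))).sub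
        (((contOn_f θ hθ (-θ) m (s-1)).const_smul (if 1 ≤ s then θ else 0)))
  have hFTC : ∫ x in (0:ℝ)..1, D x = H 1 - H 0 :=
    intervalIntegral.integral_eq_sub_of_hasDerivAt_of_le zero_le_one hcont hderiv hint
  have hDE : ∫ x in (0:ℝ)..1, D x = ∫ x in (0:ℝ)..1, E x := by
    apply intervalIntegral.integral_congr
    rw [Set.uIcc_of_le (zero_le_one)]
    exact hEeq
  have ia := (intInt_f θ hθ (-θ) m s).const_mul (m:ℝ)
  have ib := (intInt_f θ hθ (-θ) (m-1) s).const_mul (m:ℝ)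
  have ic := (intInt_f θ hθ (-θ) m s).const_mul (θ+1)
  have id' := (intInt_f θ hθ (-θ) m (s-1)).const_mul (if 1 ≤ s then θ else 0)
  have hEint : ∫ x in (0:ℝ)..1, E x
      = (m:ℝ) * segInt θ m s - (m:ℝ) * segInt θ (m-1) s + (θ+1) * segInt θ m s
        - (if 1 ≤ s then θ else 0) * segInt θ m (s-1) := by
    rw [hE]
    rw [intervalIntegral.integral_sub ((ia.sub ib).add ic) id',
      intervalIntegral.integral_add (ia.sub ib) ic,
      intervalIntegral.integral_sub ia ib,
      intervalIntegral.integral_const_mul, intervalIntegral.integral_const_mul,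
      intervalIntegral.integral_const_mul, intervalIntegral.integral_const_mul]
    rfl
  have := hFTC.symm.trans hDE
  rw [hEint, hH1, hH0, sub_zero] at this
  linarith [this]


/-- `pSeg θ n s = P(S_n = s)`, the distribution of the number of segregating sites in a
stationary sample of `n` genes: `pSeg θ 1 s = δ_{s0}` and for `n ≥ 2`,
`pSeg θ n s = (n-1) ∫_0^1 (1-x)^{n-2} x^θ (-θ log x)^s / s! dx`. -/
noncomputable def pSeg (θ : ℝ) (n s : ℕ) : ℝ :=
  if n = 1 then (if s = 0 then 1 else 0)
  else ((n : ℝ) - 1) *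
    ∫ x in (0:ℝ)..1, (1 - x) ^ (n - 2) * x ^ θ * (-θ * Real.log x) ^ s / (Nat.factorial s : ℝ)

lemma pSeg_eq (θ : ℝ) {n : ℕ} (hn : n ≠ 1) (s : ℕ) :
    pSeg θ n s = ((n : ℝ) - 1) * segInt θ (n - 2) s := by
  rw [pSeg, if_neg hn]; rfl

lemma pSeg_pred (θ : ℝ) (n : ℕ) (hn : 2 ≤ n) (s : ℕ) :
    pSeg θ (n - 1) s
      = ((n : ℝ) - 2) * segInt θ (n - 3) s + (if n - 2 = 0 ∧ s = 0 then 1 else 0) := by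
  rcases eq_or_lt_of_le hn with h2 | h3
  · subst h2
    rw [pSeg, if_pos rfl]
    norm_num
  · have hn3 : 3 ≤ n := h3
    have h1 : n - 1 ≠ 1 := by omega
    rw [pSeg_eq θ h1 s]
    have e1 : n - 1 - 2 = n - 3 := by omega
    have e2 : ((n - 1 : ℕ) : ℝ) - 1 = (n : ℝ) - 2 := by
      have : ((n - 1 : ℕ) : ℝ) = (n : ℝ) - 1 := by
        push_cast [Nat.cast_sub (by omega : 1 ≤ n)]; ring
      rw [this]; ring
    rw [e1, e2, if_neg (by omega : ¬ (n - 2 = 0 ∧ s = 0)), add_zero]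

/-- The recursion `(n+θ-1) p(n,s) = θ p(n,s-1) + (n-1) p(n-1,s)` for the distribution of the
number of segregating sites, together with the boundary case `s = 0`. -/
theorem stmt_5 (θ : ℝ) (hθ : 0 < θ) (n : ℕ) (hn : 2 ≤ n) :
    (∀ s : ℕ, 1 ≤ s →
      ((n : ℝ) + θ - 1) * pSeg θ n s = θ * pSeg θ n (s - 1) + ((n : ℝ) - 1) * pSeg θ (n - 1) s) ∧
    ((n : ℝ) + θ - 1) * pSeg θ n 0 = ((n : ℝ) - 1) * pSeg θ (n - 1) 0 := by
  have hn1 : n ≠ 1 := by omega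
  have hM : ((n - 2 : ℕ) : ℝ) = (n : ℝ) - 2 := by
    push_cast [Nat.cast_sub hn]; ring
  have hco : (n : ℝ) + θ - 1 = ((n - 2 : ℕ) : ℝ) + θ + 1 := by rw [hM]; ring
  have he : n - 2 - 1 = n - 3 := by omega
  constructor
  · intro s hs
    have hk := key θ hθ (n - 2) s
    rw [if_pos hs, he, hM] at hk
    rw [pSeg_eq θ hn1 s, pSeg_eq θ hn1 (s - 1), pSeg_pred θ n hn s, hco, hM]
    calc (((n:ℝ) - 2) + θ + 1) * (((n:ℝ) - 1) * segInt θ (n - 2) s)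
        = ((n:ℝ) - 1) * ((((n:ℝ) - 2) + θ + 1) * segInt θ (n - 2) s) := by ring
      _ = ((n:ℝ) - 1) * (((n:ℝ) - 2) * segInt θ (n - 3) s + θ * segInt θ (n - 2) (s - 1)
            + (if n - 2 = 0 ∧ s = 0 then 1 else 0)) := by rw [hk]
      _ = θ * (((n:ℝ) - 1) * segInt θ (n - 2) (s - 1))
            + ((n:ℝ) - 1) * (((n:ℝ) - 2) * segInt θ (n - 3) s
              + (if n - 2 = 0 ∧ s = 0 then 1 else 0)) := by ring
  · have hk := key θ hθ (n - 2) 0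
    rw [if_neg (by norm_num), he, hM, zero_mul, add_zero] at hk
    rw [pSeg_eq θ hn1 0, pSeg_pred θ n hn 0, hco, hM]
    calc (((n:ℝ) - 2) + θ + 1) * (((n:ℝ) - 1) * segInt θ (n - 2) 0)
        = ((n:ℝ) - 1) * ((((n:ℝ) - 2) + θ + 1) * segInt θ (n - 2) 0) := by ring
      _ = ((n:ℝ) - 1) * (((n:ℝ) - 2) * segInt θ (n - 3) 0
            + (if n - 2 = 0 ∧ (0:ℕ) = 0 then 1 else 0)) := by rw [hk]
      _ = ((n:ℝ) - 1) * (((n:ℝ) - 2) * segInt θ (n - 3) 0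
            + (if n - 2 = 0 ∧ (0:ℕ) = 0 then 1 else 0)) := rfl
end

section
/- For every integer $n \ge 1$ and every real $t \ge 0$, $\sum_{l=1}^{n} q^{0}_{n,l}(t) = 1$; that is, the distribution $\{q^{0}_{n,l}(t)\}_{l=1}^{n}$ of the number of ancestral lineages $A_n(t)$ of a sample of $n$ genes at time $t$ in the Kingman coalescent is a probability distribution on $\{1, \ldots, n\}$. -/
open Finset

open Nat

lemma diff_step (m : ℕ) (f : ℕ → ℝ) :
    ∑ a ∈ range (m+2), (-1:ℝ)^a * ((m+1).choose a) * f a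
      = ∑ a ∈ range (m+1), (-1:ℝ)^a * (m.choose a) * (f a - f (a+1)) := by
  have e : ∀ a ∈ range (m+1), (-1:ℝ)^(a+1) * ((m+1).choose (a+1)) * f (a+1)
      = (-1:ℝ)^(a+1) * (m.choose a) * f (a+1) + (-1:ℝ)^(a+1) * (m.choose (a+1)) * f (a+1) := by
    intro a _; rw [Nat.choose_succ_succ']; push_cast; ring
  have hR : ∑ a ∈ range (m+1), (-1:ℝ)^a * (m.choose a) * (f a - f (a+1))
      = (∑ a ∈ range (m+1), (-1:ℝ)^a * (m.choose a) * f a)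
        - ∑ a ∈ range (m+1), (-1:ℝ)^a * (m.choose a) * f (a+1) := by
    rw [← Finset.sum_sub_distrib]; exact Finset.sum_congr rfl fun a _ => by ring
  have hA : ∑ a ∈ range (m+1), (-1:ℝ)^(a+1) * (m.choose a) * f (a+1)
      = -∑ a ∈ range (m+1), (-1:ℝ)^a * (m.choose a) * f (a+1) := by
    rw [← Finset.sum_neg_distrib]; exact Finset.sum_congr rfl fun a _ => by ring
  have t1 := Finset.sum_range_succ' (fun a => (-1:ℝ)^a * (m.choose a) * f a) (m+1)
  have t2 := Finset.sum_range_succ (fun a => (-1:ℝ)^a * (m.choose a) * f a) (m+1)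
  rw [Finset.sum_range_succ', Finset.sum_congr rfl e, Finset.sum_add_distrib, hR]
  simp only [Nat.choose_zero_right, Nat.choose_succ_self, Nat.cast_one, Nat.cast_zero,
    pow_zero, one_mul, mul_zero, zero_mul, mul_one, add_zero] at t1 t2 hA ⊢
  linarith

lemma Vlem : ∀ (n : ℕ) (k r : ℕ), k < n →
    ∑ a ∈ range (n+1), (-1:ℝ)^a * (n.choose a) * ((a+r).choose k) = 0 := by
  intro n
  induction n with
  | zero => intro k r h; omega
  | succ m ih =>
    intro k r h
    rw [show m + 1 + 1 = m + 2 from rfl, diff_step m (fun a => (((a+r).choose k : ℕ) : ℝ))]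
    cases k with
    | zero => simp
    | succ k' =>
      have e : ∀ a ∈ range (m+1), (-1:ℝ)^a * (m.choose a) *
            ((((a+r).choose (k'+1) : ℕ) : ℝ) - (((a+1+r).choose (k'+1) : ℕ) : ℝ))
          = -((-1:ℝ)^a * (m.choose a) * (((a+r).choose k' : ℕ) : ℝ)) := by
        intro a _
        have h2 : (a+1+r).choose (k'+1) = (a+r).choose k' + (a+r).choose (k'+1) := by
          rw [show a+1+r = (a+r)+1 by ring, Nat.choose_succ_succ']
        rw [h2]; push_cast; ring
      rw [Finset.sum_congr rfl e, Finset.sum_neg_distrib, ih k' r (by omega), neg_zero]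


lemma risingFac_natCast (l m : ℕ) : risingFac (l:ℝ) m = (Nat.ascFactorial l m : ℝ) := by
  induction m with
  | zero => simp [risingFac]
  | succ k ih =>
    rw [risingFac, Finset.prod_range_succ, ← risingFac, ih, Nat.ascFactorial_succ]
    push_cast; ring

lemma S_zero (j : ℕ) (hj : 2 ≤ j) :
    ∑ l ∈ Icc 1 j, (-1:ℝ)^(j-l) * risingFac (l:ℝ) (j-1) / ((l ! : ℝ) * ((j-l)! : ℝ)) = 0 := by
  obtain ⟨d, rfl⟩ : ∃ d, j = d + 1 := ⟨j-1, by omega⟩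
  have hd : 1 ≤ d := by omega
  rw [← Finset.Ico_add_one_right_eq_Icc, Finset.sum_Ico_eq_sum_range]
  have hrange : d + 1 + 1 - 1 = d + 1 := rfl
  rw [hrange]
  have key : ∀ a ∈ range (d+1),
      (-1:ℝ)^(d+1-(1+a)) * risingFac ((1+a : ℕ):ℝ) (d+1-1) / (((1+a)! : ℝ) * (((d+1-(1+a))! : ℕ) : ℝ))
      = ((-1:ℝ)^d * ((d-1)! : ℝ) / (d ! : ℝ)) * ((-1:ℝ)^a * (d.choose a) * ((a+d).choose (d-1))) := by
    intro a ha
    have had : a ≤ d := by simp at ha; omega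
    have hsub1 : d + 1 - (1 + a) = d - a := by omega
    have hsub2 : d + 1 - 1 = d := rfl
    rw [hsub1, hsub2, risingFac_natCast]
    have h1 : a ! * (1+a).ascFactorial d = (a+d)! := by
      have := Nat.factorial_mul_ascFactorial a d
      rwa [show a + 1 = 1 + a by ring] at this
    have h2 : d.choose a * a ! * (d-a)! = d ! := Nat.choose_mul_factorial_mul_factorial had
    have h3 : (a+d).choose (d-1) * (d-1)! * (a+1)! = (a+d)! := by
      have := Nat.choose_mul_factorial_mul_factorial (show d-1 ≤ a+d by omega)
      rwa [show a+d-(d-1) = a+1 by omega] at this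
    have hsign : (-1:ℝ)^(d-a) * (-1:ℝ)^a = (-1:ℝ)^d := by
      rw [← pow_add]; congr 1; omega
    have hsq : (-1:ℝ)^a * (-1:ℝ)^a = 1 := by
      rw [← pow_add]; exact Even.neg_one_pow ⟨a, rfl⟩
    have hsign' : (-1:ℝ)^(d-a) = (-1:ℝ)^d * (-1:ℝ)^a := by
      have h := congrArg (· * (-1:ℝ)^a) hsign
      simpa [mul_assoc, hsq] using h
    have hfa : (a ! : ℝ) ≠ 0 := by positivity
    have h1' : (a ! : ℝ) * ((1+a).ascFactorial d : ℝ) = ((a+d)! : ℝ) := by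
      exact_mod_cast congrArg (fun x : ℕ => (x:ℝ)) h1
    have h2' : (d.choose a : ℝ) * (a ! : ℝ) * ((d-a)! : ℝ) = (d ! : ℝ) := by
      exact_mod_cast congrArg (fun x : ℕ => (x:ℝ)) h2
    have h3' : ((a+d).choose (d-1) : ℝ) * ((d-1)! : ℝ) * ((a+1)! : ℝ) = ((a+d)! : ℝ) := by
      exact_mod_cast congrArg (fun x : ℕ => (x:ℝ)) h3
    have hf : ((1+a)! : ℝ) = ((a+1)! : ℝ) := by rw [add_comm]
    have hM : ((1+a).ascFactorial d : ℝ) / (((1+a)! : ℝ) * ((d-a)! : ℝ))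
        = ((d-1)! : ℝ) / (d ! : ℝ) * ((d.choose a : ℝ) * ((a+d).choose (d-1) : ℝ)) := by
      rw [div_mul_eq_mul_div, div_eq_div_iff (by positivity) (by positivity)]
      apply mul_left_cancel₀ hfa
      rw [hf]
      linear_combination (d ! : ℝ) * h1'
        - ((a+d).choose (d-1) : ℝ) * ((d-1)! : ℝ) * ((a+1)! : ℝ) * h2'
        - (d ! : ℝ) * h3'
    rw [hsign']
    linear_combination ((-1:ℝ)^d * (-1:ℝ)^a) * hM
  rw [Finset.sum_congr rfl key, ← Finset.mul_sum, Vlem d (d-1) d (by omega), mul_zero]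

/-- `{q^0_{n,l}(t)}_{l=1}^n` is a probability distribution on `{1,…,n}`:
`∑_{l=1}^n q^0_{n,l}(t) = 1`. -/
theorem stmt_8 (n : ℕ) (hn : 1 ≤ n) (t : ℝ) (ht : 0 ≤ t) :
    ∑ l ∈ Finset.Icc 1 n, q 0 n l t = 1 := by
  have hswap : ∀ l j : ℕ, l ∈ Icc 1 n ∧ j ∈ Icc l n ↔ l ∈ Icc 1 j ∧ j ∈ Icc 1 n := by
    intro l j; simp only [mem_Icc]; omega
  simp only [q]
  rw [Finset.sum_comm' hswap]
  have key : ∀ j ∈ Icc 1 n,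
      (∑ l ∈ Icc 1 j,
        Real.exp (-(↑j * (↑j + 0 - 1) * t) / 2) * (-1 : ℝ) ^ (j - l) *
          ((2 * ↑j + 0 - 1) * risingFac (↑l + 0) (j - 1)) /
            ((Nat.factorial l : ℝ) * (Nat.factorial (j - l) : ℝ)) *
          (fallingFac n j / risingFac (↑n + 0) j))
      = if j = 1 then 1 else 0 := by
    intro j hj
    rw [mem_Icc] at hj
    by_cases hj1 : j = 1
    · subst hj1
      rw [if_pos rfl, Finset.Icc_self, Finset.sum_singleton]
      have hne : (n : ℝ) ≠ 0 := by
        have : (0:ℝ) < n := by exact_mod_cast hn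
        linarith
      simp [risingFac, fallingFac, Real.exp_zero]
      field_simp
      norm_num
    · rw [if_neg hj1]
      have h2 : 2 ≤ j := by omega
      have factored : ∀ l ∈ Icc 1 j,
          Real.exp (-(↑j * (↑j + 0 - 1) * t) / 2) * (-1 : ℝ) ^ (j - l) *
            ((2 * ↑j + 0 - 1) * risingFac (↑l + 0) (j - 1)) /
              ((Nat.factorial l : ℝ) * (Nat.factorial (j - l) : ℝ)) *
            (fallingFac n j / risingFac (↑n + 0) j)
          = (Real.exp (-(↑j * (↑j + 0 - 1) * t) / 2) * (2 * ↑j + 0 - 1) *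
              (fallingFac n j / risingFac (↑n + 0) j)) *
            ((-1 : ℝ) ^ (j - l) * risingFac ((l : ℕ) : ℝ) (j - 1) /
              ((Nat.factorial l : ℝ) * (Nat.factorial (j - l) : ℝ))) := by
        intro l _
        rw [add_zero]
        ring
      rw [Finset.sum_congr rfl factored, ← Finset.mul_sum, S_zero j h2, mul_zero]
  rw [Finset.sum_congr rfl key, Finset.sum_ite_eq' (Icc 1 n) 1 (fun _ => (1:ℝ))]
  rw [if_pos (by simp [hn])]
end

section
/- Let $\theta \ge 0$ be real, let $2 \le l \le n$ be integers, and let $z \in [0,1]$. Then $\sum_{k=0}^{\infty} z^k \cdot \frac{1}{B(l-1,\, n-l+1)} \int_0^1 x^{l-2+\theta}\,(1-x)^{n-l}\,\frac{(-\theta \log x)^k}{k!}\, dx = \prod_{j=l-1}^{n-1} \frac{j}{j + \theta(1-z)}$, where $B$ denotes the Beta function. (The left side exhibits the number of mutations that arise while the sample of $n$ has at least $l$ ancestors as a Poisson mixture with mean $-\theta \log X$, where $X$ has a Beta$(l-1, n-l+1)$ distribution, and the right side is its probability generating function.) -/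
open Finset Real

/-- The Beta function `B(a,b) = Γ(a)Γ(b)/Γ(a+b)`. -/
noncomputable def betaFn (a b : ℝ) : ℝ := Real.Gamma a * Real.Gamma b / Real.Gamma (a + b)

/-!
Expanding `exp (w * g)` in its power series and exchanging sum and integral (the terms are
nonnegative, so dominated convergence applies) turns the left side into
`B(l-1, n-l+1)⁻¹ ∫₀¹ x ^ (l-2+θ(1-z)) (1-x) ^ (n-l) dx = B(l-1+θ(1-z), n-l+1) / B(l-1, n-l+1)`.
Since `Γ(x + b) = x (x+1) ⋯ (x+b-1) Γ(x)`, this ratio of Beta values is the product on the right.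
-/

open MeasureTheory Set Interval

theorem hasSum_pow_mul_intervalIntegral_pow_div_factorial {f g : ℝ → ℝ} {a b w : ℝ}
    (hw : 0 ≤ w) (hf_meas : AEStronglyMeasurable f (volume.restrict (Ι a b)))
    (hg_meas : AEStronglyMeasurable g (volume.restrict (Ι a b)))
    (hf : ∀ x ∈ Ι a b, 0 ≤ f x) (hg : ∀ x ∈ Ι a b, 0 ≤ g x)
    (hint : IntervalIntegrable (fun x => f x * exp (w * g x)) volume a b) :
    HasSum (fun k : ℕ => w ^ k * ∫ x in a..b, f x * g x ^ k / (k.factorial : ℝ))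
      (∫ x in a..b, f x * exp (w * g x)) := by
  set F : ℕ → ℝ → ℝ := fun k x => w ^ k * (f x * g x ^ k / (k.factorial : ℝ))
  have hF : ∀ x, HasSum (F · x) (f x * exp (w * g x)) := fun x => by
    rw [Real.exp_eq_exp_ℝ]
    refine ((NormedSpace.expSeries_div_hasSum_exp (w * g x)).mul_left (f x)).congr_fun
      fun k => ?_
    simp only [F]; ring
  have hF_nonneg : ∀ k, ∀ x ∈ Ι a b, 0 ≤ F k x := fun k x hx => by
    have := hf x hx; have := hg x hx; positivity
  simp_rw [← intervalIntegral.integral_const_mul]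
  exact intervalIntegral.hasSum_integral_of_dominated_convergence F
    (fun k => by fun_prop)
    (fun k => ae_of_all _ fun x hx => (Real.norm_of_nonneg (hF_nonneg k x hx)).le)
    (ae_of_all _ fun x _ => (hF x).summable)
    (hint.congr fun x _ => (hF x).tsum_eq.symm)
    (ae_of_all _ fun x _ => hF x)

theorem hasSum_pow_mul_integral_rpow_mul_neg_log_pow {s c w : ℝ} (m : ℕ) (hc : 0 ≤ c)
    (hw : 0 ≤ w) (hs : -1 < s - c * w) :
    HasSum (fun k : ℕ => w ^ k * ∫ x in (0:ℝ)..1,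
        x ^ s * (1 - x) ^ m * (-c * log x) ^ k / (k.factorial : ℝ))
      (∫ x in (0:ℝ)..1, x ^ (s - c * w) * (1 - x) ^ m) := by
  have hexp : ∀ x ∈ Ι (0:ℝ) 1,
      x ^ s * (1 - x) ^ m * exp (w * (-c * log x)) = x ^ (s - c * w) * (1 - x) ^ m := by
    intro x hx
    rw [uIoc_of_le zero_le_one] at hx
    rw [rpow_sub hx.1, rpow_def_of_pos hx.1 (c * w), div_eq_mul_inv, ← exp_neg]
    ring_nf
  have hmix := hasSum_pow_mul_intervalIntegral_pow_div_factorial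
    (f := fun x => x ^ s * (1 - x) ^ m) (g := fun x => -c * log x) hw (by fun_prop) (by fun_prop)
    (fun x hx => by
      rw [uIoc_of_le zero_le_one] at hx
      exact mul_nonneg (rpow_nonneg hx.1.le s) (pow_nonneg (sub_nonneg.2 hx.2) m))
    (fun x hx => by
      rw [uIoc_of_le zero_le_one] at hx
      exact mul_nonneg_of_nonpos_of_nonpos (neg_nonpos.2 hc) (log_nonpos hx.1.le hx.2))
    (((intervalIntegral.intervalIntegrable_rpow' hs).mul_continuousOn (by fun_prop)).congr
      fun x hx => (hexp x hx).symm)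
  rwa [intervalIntegral.integral_congr_ae (ae_of_all _ hexp)] at hmix

theorem integral_rpow_mul_one_sub_rpow_eq_betaFn {u v : ℝ} (hu : 0 < u) (hv : 0 < v) :
    ∫ x in (0:ℝ)..1, x ^ (u - 1) * (1 - x) ^ (v - 1) = betaFn u v := by
  have hcomplex : Complex.betaIntegral u v
      = ((∫ x in (0:ℝ)..1, x ^ (u - 1) * (1 - x) ^ (v - 1) : ℝ) : ℂ) := by
    rw [Complex.betaIntegral, ← intervalIntegral.integral_ofReal]
    refine intervalIntegral.integral_congr fun x hx => ?_
    rw [Set.uIcc_of_le zero_le_one] at hx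
    push_cast
    rw [Complex.ofReal_cpow hx.1, Complex.ofReal_cpow (sub_nonneg.2 hx.2)]
    push_cast; rfl
  rw [show betaFn u v = ProbabilityTheory.beta u v from rfl,
    ProbabilityTheory.beta_eq_betaIntegralReal u v hu hv, hcomplex, Complex.ofReal_re]

theorem integral_rpow_mul_one_sub_pow_eq_betaFn {u : ℝ} (hu : 0 < u) (m : ℕ) :
    ∫ x in (0:ℝ)..1, x ^ (u - 1) * (1 - x) ^ m = betaFn u (m + 1) := by
  rw [← integral_rpow_mul_one_sub_rpow_eq_betaFn hu (by positivity), add_sub_cancel_right]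
  simp_rw [rpow_natCast]

theorem Gamma_add_nat_eq_prod_mul {x : ℝ} (hx : 0 < x) (b : ℕ) :
    Gamma (x + b) = (∏ i ∈ range b, (x + i)) * Gamma x := by
  induction b with
  | zero => simp
  | succ b ih =>
    rw [Nat.cast_succ, ← add_assoc, Gamma_add_one (by positivity), ih, prod_range_succ]
    ring

theorem betaFn_add_div_betaFn_nat {x c : ℝ} (hx : 0 < x) (hxc : 0 < x + c) {b : ℕ} (hb : b ≠ 0) :
    betaFn (x + c) b / betaFn x b = ∏ i ∈ range b, (x + i) / (x + c + i) := by
  have hGb : Gamma b ≠ 0 := (Gamma_pos_of_pos (by positivity)).ne'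
  have hP : ∀ y : ℝ, 0 < y → (∏ i ∈ range b, (y + i)) ≠ 0 := fun y hy =>
    (prod_pos fun i _ => by positivity).ne'
  rw [betaFn, betaFn, Gamma_add_nat_eq_prod_mul hx, Gamma_add_nat_eq_prod_mul hxc,
    prod_div_distrib]
  have := hP x hx; have := hP _ hxc
  have := (Gamma_pos_of_pos hx).ne'; have := (Gamma_pos_of_pos hxc).ne'
  field_simp

/-- The number of mutations arising while the sample of `n` has at least `l` ancestors is a
Poisson mixture with mean `-θ log X`, `X ~ Beta(l-1, n-l+1)`; its pgf is
`∏_{j=l-1}^{n-1} j/(j+θ(1-z))`. -/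
theorem stmt_10 (θ : ℝ) (hθ : 0 ≤ θ) (n l : ℕ) (hl : 2 ≤ l) (hln : l ≤ n)
    (z : ℝ) (hz0 : 0 ≤ z) (hz1 : z ≤ 1) :
    ∑' k : ℕ, z ^ k * ((1 / betaFn ((l : ℝ) - 1) ((n : ℝ) - l + 1)) *
        ∫ x in (0:ℝ)..1, x ^ ((l : ℝ) - 2 + θ) * (1 - x) ^ (n - l) *
          (-θ * Real.log x) ^ k / (Nat.factorial k : ℝ))
      = ∏ j ∈ Finset.Ico (l - 1) n, (j : ℝ) / (j + θ * (1 - z)) := by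
  have hl1 : (0:ℝ) < l - 1 := by
    have : (2:ℝ) ≤ l := by exact_mod_cast hl
    linarith
  have hc : 0 ≤ θ * (1 - z) := mul_nonneg hθ (sub_nonneg.2 hz1)
  have hmix := hasSum_pow_mul_integral_rpow_mul_neg_log_pow (s := l - 2 + θ) (n - l) hθ hz0
    (by nlinarith)
  rw [show (l : ℝ) - 2 + θ - θ * z = l - 1 + θ * (1 - z) - 1 by ring,
    integral_rpow_mul_one_sub_pow_eq_betaFn (by positivity), Nat.cast_sub hln] at hmix
  have hratio := betaFn_add_div_betaFn_nat hl1 (c := θ * (1 - z)) (by positivity)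
    (b := n - l + 1) (by omega)
  rw [Nat.cast_add, Nat.cast_sub hln, Nat.cast_one] at hratio
  calc _ = ∑' k : ℕ, (betaFn ((l : ℝ) - 1) ((n : ℝ) - l + 1))⁻¹ * (z ^ k *
        ∫ x in (0:ℝ)..1, x ^ ((l : ℝ) - 2 + θ) * (1 - x) ^ (n - l) *
          (-θ * Real.log x) ^ k / (Nat.factorial k : ℝ)) := tsum_congr fun k => by ring
    _ = ∏ i ∈ range (n - l + 1), ((l : ℝ) - 1 + i) / (l - 1 + θ * (1 - z) + i) := by
      rw [(hmix.mul_left _).tsum_eq, inv_mul_eq_div, hratio]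
    _ = _ := by
      rw [prod_Ico_eq_prod_range, show n - (l - 1) = n - l + 1 by omega]
      refine prod_congr rfl fun i _ => ?_
      push_cast [Nat.cast_sub (by omega : 1 ≤ l)]
      ring
end

section
/- For every integer $n \ge 1$ and every real $\theta > 0$, $\sum_{\alpha} n! \prod_{j=1}^{n} \frac{(\theta/j)^{\alpha_j}}{\alpha_j!} = \theta(\theta+1)\cdots(\theta+n-1)$, where the sum is over all tuples $(\alpha_1,\ldots,\alpha_n)$ of nonnegative integers with $\sum_{j=1}^{n} j\,\alpha_j = n$. Equivalently, the Ewens Sampling Formula $p_E(\alpha_1,\ldots,\alpha_n) = \frac{n!}{\theta^{(n)}} \prod_{j=1}^{n} \big(\frac{\theta}{j}\big)^{\alpha_j} \frac{1}{\alpha_j!}$ defines a probability distribution on such tuples. -/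
/-!
For `c : Fin n → ℝ`, the sum `F_k` of `∏ i, c i ^ α i / (α i)!` over the tuples `α` with
`∑ i, (i + 1) α i = k` is the coefficient of `x ^ k` in `∏ i, exp (c i x ^ (i + 1))`, and applying
`x d/dx` to that product gives `k F_k = ∑ i, (i + 1) c i F_{k - i - 1}`. Combinatorially this is
removing one block of size `i + 1` from `α`. For `c i = θ / (i + 1)` and `k ≤ n` the recursion reads
`k F_k = θ ∑_{m < k} F_m`, the one satisfied by the coefficients of `(1 - x)^(-θ)`; subtracting
consecutive instances gives `(k + 1) F_{k + 1} = (θ + k) F_k`, hence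
`k! F_k = θ (θ + 1) ⋯ (θ + k - 1)`.
-/

open Finset

/-- All tuples `(α_1, …, α_n)` of nonnegative integers with `∑_j j α_j = n`
(here `α i` stands for `α_{i+1}`; any solution automatically has each entry `≤ n`,
so this finset captures exactly the solution set). -/
def esfTuples (n : ℕ) : Finset (Fin n → ℕ) :=
  (Fintype.piFinset fun _ : Fin n => Finset.range (n + 1)).filter
    (fun α => ∑ i : Fin n, ((i : ℕ) + 1) * α i = n)

open Function

section WeightedTuples

variable {n : ℕ}

def weightedSum (α : Fin n → ℕ) : ℕ := ∑ i : Fin n, ((i : ℕ) + 1) * α i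

def weightedTuples (n k : ℕ) : Finset (Fin n → ℕ) :=
  (Fintype.piFinset fun _ : Fin n => range (k + 1)).filter (fun α => weightedSum α = k)

theorem esfTuples_eq_weightedTuples (n : ℕ) : esfTuples n = weightedTuples n n := rfl

theorem mul_apply_le_weightedSum (α : Fin n → ℕ) (i : Fin n) :
    ((i : ℕ) + 1) * α i ≤ weightedSum α :=
  single_le_sum (f := fun t : Fin n => ((t : ℕ) + 1) * α t) (fun _ _ => Nat.zero_le _)
    (mem_univ i)

theorem mem_weightedTuples {k : ℕ} {α : Fin n → ℕ} :
    α ∈ weightedTuples n k ↔ weightedSum α = k := by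
  simp only [weightedTuples, mem_filter, Fintype.mem_piFinset, mem_range, and_iff_right_iff_imp]
  rintro rfl i
  have := mul_apply_le_weightedSum α i
  nlinarith

theorem weightedSum_update_succ (α : Fin n → ℕ) (i : Fin n) :
    weightedSum (update α i (α i + 1)) = weightedSum α + ((i : ℕ) + 1) := by
  rw [weightedSum, weightedSum, ← add_sum_erase _ _ (mem_univ i),
    ← add_sum_erase _ _ (mem_univ i), update_self]
  have : ∑ t ∈ univ.erase i, ((t : ℕ) + 1) * update α i (α i + 1) t
      = ∑ t ∈ univ.erase i, ((t : ℕ) + 1) * α t :=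
    sum_congr rfl fun t ht => by rw [update_of_ne (ne_of_mem_erase ht)]
  rw [this]
  ring

theorem weightedTuples_zero (n : ℕ) : weightedTuples n 0 = {0} := by
  ext α
  simp [mem_weightedTuples, weightedSum, funext_iff]

end WeightedTuples

section ProdExpCoeff

variable {n : ℕ} (c : Fin n → ℝ)

noncomputable def expMonomial (α : Fin n → ℕ) : ℝ := ∏ i, c i ^ α i / (α i).factorial

noncomputable def prodExpCoeff (k : ℕ) : ℝ := ∑ α ∈ weightedTuples n k, expMonomial c α

theorem prodExpCoeff_zero : prodExpCoeff c 0 = 1 := by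
  simp [prodExpCoeff, weightedTuples_zero, expMonomial]

theorem succ_mul_expMonomial_update (β : Fin n → ℕ) (i : Fin n) :
    ((β i : ℝ) + 1) * expMonomial c (update β i (β i + 1)) = c i * expMonomial c β := by
  rw [expMonomial, expMonomial, Fintype.prod_eq_mul_prod_compl i,
    Fintype.prod_eq_mul_prod_compl i, update_self]
  have : ∏ t ∈ {i}ᶜ, c t ^ update β i (β i + 1) t / (update β i (β i + 1) t).factorial
      = ∏ t ∈ {i}ᶜ, c t ^ β t / (β t).factorial :=
    prod_congr rfl fun t ht => by rw [update_of_ne (by simpa using ht)]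
  rw [this, pow_succ, Nat.factorial_succ]
  push_cast
  field_simp

theorem sum_apply_mul_expMonomial (i : Fin n) (k : ℕ) :
    ∑ α ∈ weightedTuples n (k + ((i : ℕ) + 1)), (α i : ℝ) * expMonomial c α
      = c i * prodExpCoeff c k := by
  rw [prodExpCoeff, mul_sum]
  symm
  refine sum_of_injOn (fun β => update β i (β i + 1)) ?_ ?_ ?_ ?_
  · intro β _ γ _ h
    have hi : β i = γ i := by simpa using congrFun h i
    ext t
    rcases eq_or_ne t i with rfl | ht
    · exact hi
    · simpa [update_of_ne ht] using congrFun h t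
  · intro β hβ
    rw [mem_coe, mem_weightedTuples] at hβ ⊢
    rw [weightedSum_update_succ, hβ]
  · intro α hα hnot
    rw [mem_weightedTuples] at hα
    suffices α i = 0 by simp [this]
    by_contra h
    have hα' : update (update α i (α i - 1)) i (update α i (α i - 1) i + 1) = α := by
      rw [update_idem, update_self, Nat.sub_add_cancel (Nat.one_le_iff_ne_zero.mpr h),
        update_eq_self]
    refine hnot ⟨update α i (α i - 1), ?_, hα'⟩
    have := weightedSum_update_succ (update α i (α i - 1)) i
    rw [hα', hα] at this
    rw [mem_coe, mem_weightedTuples]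
    omega
  · intro β _
    simp only [update_self]
    push_cast
    exact (succ_mul_expMonomial_update c β i).symm

theorem apply_eq_zero_of_mem_weightedTuples {k : ℕ} {α : Fin n → ℕ}
    (hα : α ∈ weightedTuples n k) {i : Fin n} (hik : k < (i : ℕ) + 1) : α i = 0 := by
  have := mul_apply_le_weightedSum α i
  rw [mem_weightedTuples.mp hα] at this
  by_contra h
  nlinarith [Nat.one_le_iff_ne_zero.mpr h]

theorem natCast_mul_prodExpCoeff (k : ℕ) :
    (k : ℝ) * prodExpCoeff c k = ∑ i : Fin n,
      if (i : ℕ) + 1 ≤ k then ((i : ℝ) + 1) * c i * prodExpCoeff c (k - ((i : ℕ) + 1)) else 0 := by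
  calc (k : ℝ) * prodExpCoeff c k
      = ∑ α ∈ weightedTuples n k, ∑ i : Fin n, ((i : ℝ) + 1) * ((α i : ℝ) * expMonomial c α) := by
        rw [prodExpCoeff, mul_sum]
        refine sum_congr rfl fun α hα => ?_
        rw [← mem_weightedTuples.mp hα, weightedSum]
        push_cast
        rw [sum_mul]
        exact sum_congr rfl fun i _ => by ring
    _ = ∑ i : Fin n, ((i : ℝ) + 1) * ∑ α ∈ weightedTuples n k, (α i : ℝ) * expMonomial c α := by
        rw [sum_comm]
        simp only [mul_sum]
    _ = _ := by
        refine sum_congr rfl fun i _ => ?_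
        split_ifs with hik
        · obtain ⟨m, rfl⟩ := Nat.exists_eq_add_of_le' hik
          rw [sum_apply_mul_expMonomial, Nat.add_sub_cancel, mul_assoc]
        · refine mul_eq_zero_of_right _ (sum_eq_zero fun α hα => ?_)
          simp [apply_eq_zero_of_mem_weightedTuples hα (not_le.mp hik)]

end ProdExpCoeff

noncomputable def ewensRate (θ : ℝ) (n : ℕ) (i : Fin n) : ℝ := θ / ((i : ℕ) + 1)

theorem natCast_mul_prodExpCoeff_ewensRate (θ : ℝ) {n k : ℕ} (hk : k ≤ n) :
    (k : ℝ) * prodExpCoeff (ewensRate θ n) k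
      = θ * ∑ m ∈ range k, prodExpCoeff (ewensRate θ n) m := by
  have hrate : ∀ i : Fin n, ((i : ℝ) + 1) * ewensRate θ n i = θ := fun i => by
    rw [ewensRate]
    field_simp
  have hfilter : (range n).filter (fun j => j + 1 ≤ k) = range k := by
    ext j
    simp only [mem_filter, mem_range]
    omega
  simp only [natCast_mul_prodExpCoeff, hrate]
  rw [Fin.sum_univ_eq_sum_range
      (fun j => if j + 1 ≤ k then θ * prodExpCoeff (ewensRate θ n) (k - (j + 1)) else 0),
    ← sum_filter, hfilter, mul_sum, ← sum_range_reflect]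
  refine sum_congr rfl fun j hj => ?_
  rw [show k - (k - 1 - j + 1) = j by grind]

theorem succ_mul_prodExpCoeff_ewensRate_succ (θ : ℝ) {n k : ℕ} (hk : k + 1 ≤ n) :
    ((k : ℝ) + 1) * prodExpCoeff (ewensRate θ n) (k + 1)
      = (θ + k) * prodExpCoeff (ewensRate θ n) k := by
  have h₁ := natCast_mul_prodExpCoeff_ewensRate θ hk
  have h₀ := natCast_mul_prodExpCoeff_ewensRate θ (k.le_succ.trans hk)
  rw [sum_range_succ, mul_add, ← h₀] at h₁
  push_cast at h₁
  linarith

theorem factorial_mul_prodExpCoeff_ewensRate (θ : ℝ) {n k : ℕ} (hk : k ≤ n) :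
    (k.factorial : ℝ) * prodExpCoeff (ewensRate θ n) k = ∏ t ∈ range k, (θ + t) := by
  induction k with
  | zero => simp [prodExpCoeff_zero]
  | succ k ih =>
    rw [Nat.factorial_succ, prod_range_succ, ← ih (k.le_succ.trans hk)]
    push_cast
    linear_combination (k.factorial : ℝ) * succ_mul_prodExpCoeff_ewensRate_succ θ hk

theorem stmt_13_general (n : ℕ) (θ : ℝ) :
    ∑ α ∈ esfTuples n,
        (Nat.factorial n : ℝ) *
          ∏ i : Fin n, (θ / ((i : ℕ) + 1)) ^ (α i) / (Nat.factorial (α i) : ℝ)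
      = ∏ i ∈ Finset.range n, (θ + i) := by
  rw [esfTuples_eq_weightedTuples, ← mul_sum, ← factorial_mul_prodExpCoeff_ewensRate θ le_rfl]
  rfl

/-- The Ewens Sampling Formula is a probability distribution:
`∑_α n! ∏_{j=1}^n (θ/j)^{α_j} / α_j! = θ(θ+1)⋯(θ+n-1)`, the sum over all tuples
`(α_1,…,α_n)` of nonnegative integers with `∑_j j α_j = n`. -/
theorem stmt_13 (n : ℕ) (hn : 1 ≤ n) (θ : ℝ) (hθ : 0 < θ) :
    ∑ α ∈ esfTuples n,
        (Nat.factorial n : ℝ) *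
          ∏ i : Fin n, (θ / ((i : ℕ) + 1)) ^ (α i) / (Nat.factorial (α i) : ℝ)
      = ∏ i ∈ Finset.range n, (θ + i) :=
  stmt_13_general n θ
end

section
/- Let $n \ge 1$ and $b \ge 1$ be integers, let $\theta > 0$ be real, let $r_1, \ldots, r_b$ be nonnegative integers, and set $m = \sum_{j=1}^{b} j\, r_j$. Then $\sum_{\alpha} p_E(\alpha) \prod_{j=1}^{b} (\alpha_j)_{[r_j]} = \mathbf{1}\{m \le n\}\, \frac{n!\,\Gamma(\theta+n-m)}{(n-m)!\,\Gamma(\theta+n)}\, \prod_{j=1}^{b} \Big(\frac{\theta}{j}\Big)^{r_j}$, where the sum is over all tuples $(\alpha_1,\ldots,\alpha_n)$ of nonnegative integers with $\sum_{j=1}^{n} j\,\alpha_j = n$, and $(\alpha)_{[r]} = \alpha(\alpha-1)\cdots(\alpha-r+1)$ (equal to $0$ if $\alpha < r$). -/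
open Finset

/-- The Ewens Sampling Formula `p_E(α) = (n!/θ^{(n)}) ∏_{j=1}^n (θ/j)^{α_j}/α_j!`. -/
noncomputable def pE (θ : ℝ) {n : ℕ} (α : Fin n → ℕ) : ℝ :=
  (Nat.factorial n : ℝ) / (∏ i ∈ Finset.range n, (θ + i)) *
    ∏ i : Fin n, (θ / ((i : ℕ) + 1)) ^ (α i) / (Nat.factorial (α i) : ℝ)

/-- `extendCounts n α j = α_j` for `1 ≤ j ≤ n`, and `0` otherwise. -/
def extendCounts (n : ℕ) (α : Fin n → ℕ) (j : ℕ) : ℕ :=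
  if h : 1 ≤ j ∧ j ≤ n then α ⟨j - 1, by omega⟩ else 0

/-!
Write `p_E = n!/θ^{(n)} · w` with `w(α) = ∏ⱼ (θ/j)^{αⱼ}/αⱼ!`. Since `(a+r)_{[r]}/(a+r)! = 1/a!`,
the substitution `α = β + ρ` turns `w(α) ∏ⱼ (αⱼ)_{[ρⱼ]}` into `∏ⱼ (θ/j)^{ρⱼ} · w(β)`, with `β`
running over the tuples of size `∑ j βⱼ = n - m`. So it remains to show that the total weight
`S(N)` of the tuples of size `N` is `θ^{(N)}/N!`. Taking for `ρ` a unit vector gives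
`∑ w(α) αⱼ = (θ/j) S(N - j)`; summing `j` times this over `j` yields the recursion
`N S(N) = θ ∑_{k<N} S(k)`, which `θ^{(N)}/N!` satisfies as well. Finally
`Γ(θ+k) = θ^{(k)} Γ(θ)`.
-/
namespace ESF

def partSize {M : ℕ} (α : Fin M → ℕ) : ℕ :=
  ∑ i : Fin M, ((i : ℕ) + 1) * α i

/-- Multiplicity vectors of the partitions of `N` into parts of size at most `M`:
`α i` is the number of parts equal to `i + 1`. -/
def partCounts (M N : ℕ) : Finset (Fin M → ℕ) :=
  (Fintype.piFinset fun _ : Fin M => range (N + 1)).filter (fun α => partSize α = N)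

noncomputable def esfWeight (θ : ℝ) {M : ℕ} (α : Fin M → ℕ) : ℝ :=
  ∏ i : Fin M, (θ / ((i : ℕ) + 1)) ^ (α i) / ((α i).factorial : ℝ)

lemma esfTuples_eq_partCounts (n : ℕ) : esfTuples n = partCounts n n := rfl

lemma pE_eq_mul_esfWeight (θ : ℝ) {n : ℕ} (α : Fin n → ℕ) :
    pE θ α = (n.factorial : ℝ) / (∏ i ∈ range n, (θ + i)) * esfWeight θ α := rfl

lemma partSize_add {M : ℕ} (α β : Fin M → ℕ) : partSize (α + β) = partSize α + partSize β := by
  simp only [partSize, Pi.add_apply, mul_add, sum_add_distrib]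

lemma mem_partCounts {M N : ℕ} {α : Fin M → ℕ} : α ∈ partCounts M N ↔ partSize α = N := by
  refine ⟨fun h => (mem_filter.mp h).2, fun h => mem_filter.mpr
    ⟨Fintype.mem_piFinset.mpr fun i => mem_range.mpr ?_, h⟩⟩
  have : α i ≤ partSize α :=
    calc α i ≤ ((i : ℕ) + 1) * α i := Nat.le_mul_of_pos_left _ i.succ_pos
      _ ≤ partSize α := single_le_sum (f := fun k : Fin M => ((k : ℕ) + 1) * α k)
          (fun _ _ => Nat.zero_le _) (mem_univ i)
  omega

lemma partCounts_zero (M : ℕ) : partCounts M 0 = {0} := by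
  ext α
  simp [mem_partCounts, partSize, sum_eq_zero_iff, funext_iff]

lemma pow_add_div_factorial_mul_descFactorial (x : ℝ) (a r : ℕ) :
    x ^ (a + r) / ((a + r).factorial : ℝ) * ((a + r).descFactorial r : ℝ)
      = x ^ r * (x ^ a / (a.factorial : ℝ)) := by
  have h := Nat.factorial_mul_descFactorial (Nat.le_add_left r a)
  rw [Nat.add_sub_cancel] at h
  rw [← h, pow_add]
  push_cast
  field_simp

lemma esfWeight_add_mul_prod_descFactorial (θ : ℝ) {M : ℕ} (β ρ : Fin M → ℕ) :
    esfWeight θ (β + ρ) * ∏ i, (((β + ρ) i).descFactorial (ρ i) : ℝ)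
      = (∏ i : Fin M, (θ / ((i : ℕ) + 1)) ^ (ρ i)) * esfWeight θ β := by
  simp only [esfWeight, Pi.add_apply, ← prod_mul_distrib]
  exact prod_congr rfl fun i _ => pow_add_div_factorial_mul_descFactorial _ _ _

theorem sum_esfWeight_mul_prod_descFactorial (θ : ℝ) {M N : ℕ} (ρ : Fin M → ℕ) :
    ∑ α ∈ partCounts M N, esfWeight θ α * ∏ i, ((α i).descFactorial (ρ i) : ℝ)
      = if partSize ρ ≤ N then
          (∏ i : Fin M, (θ / ((i : ℕ) + 1)) ^ (ρ i)) *
            ∑ β ∈ partCounts M (N - partSize ρ), esfWeight θ β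
        else 0 := by
  classical
  have hsize : ∀ α, ρ ≤ α → partSize α = partSize (α - ρ) + partSize ρ := fun α h => by
    rw [← partSize_add, tsub_add_cancel_of_le h]
  have hsupport : ∀ α ∈ partCounts M N,
      esfWeight θ α * ∏ i, ((α i).descFactorial (ρ i) : ℝ) ≠ 0 → ρ ≤ α := by
    intro α _ hα i
    by_contra hi
    exact hα (by rw [prod_eq_zero (mem_univ i) (by simp [Nat.descFactorial_of_lt (not_le.mp hi)]),
      mul_zero])
  rw [← sum_filter_of_ne hsupport]
  split_ifs with hm
  · rw [mul_sum]
    refine sum_nbij' (· - ρ) (· + ρ) (fun α hα => ?_) (fun β hβ => ?_) (fun α hα => ?_)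
      (fun β _ => add_tsub_cancel_right β ρ) (fun α hα => ?_)
    · obtain ⟨hα, hρα⟩ := mem_filter.mp hα
      have := hsize α hρα
      rw [mem_partCounts] at hα ⊢
      omega
    · have := partSize_add β ρ
      rw [mem_partCounts] at hβ
      exact mem_filter.mpr ⟨mem_partCounts.mpr (by omega), le_add_self⟩
    · exact tsub_add_cancel_of_le (mem_filter.mp hα).2
    · rw [← esfWeight_add_mul_prod_descFactorial, tsub_add_cancel_of_le (mem_filter.mp hα).2]
  · refine sum_eq_zero fun α hα => absurd ?_ hm
    obtain ⟨hα, hρα⟩ := mem_filter.mp hα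
    have := hsize α hρα
    rw [mem_partCounts] at hα
    omega

lemma sum_esfWeight_mul_apply (θ : ℝ) {M N : ℕ} (i : Fin M) :
    ∑ α ∈ partCounts M N, esfWeight θ α * α i
      = if (i : ℕ) + 1 ≤ N then
          θ / ((i : ℕ) + 1) * ∑ β ∈ partCounts M (N - ((i : ℕ) + 1)), esfWeight θ β
        else 0 := by
  have hsingle : partSize (Pi.single i 1 : Fin M → ℕ) = (i : ℕ) + 1 := by
    rw [partSize, sum_eq_single i (fun k _ hk => by simp [hk]) (by simp)]
    simp
  have hprod : ∏ k : Fin M, (θ / ((k : ℕ) + 1)) ^ ((Pi.single i 1 : Fin M → ℕ) k)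
      = θ / ((i : ℕ) + 1) := by
    rw [prod_eq_single i (fun k _ hk => by simp [hk]) (by simp)]
    simp
  have hdesc : ∀ α : Fin M → ℕ,
      ∏ k, ((α k).descFactorial ((Pi.single i 1 : Fin M → ℕ) k) : ℝ) = α i := fun α => by
    rw [prod_eq_single i (fun k _ hk => by simp [hk]) (by simp)]
    simp
  simpa only [hdesc, hsingle, hprod] using
    sum_esfWeight_mul_prod_descFactorial θ (N := N) (Pi.single i 1)

lemma natCast_mul_sum_esfWeight (θ : ℝ) {M N : ℕ} (hN : N ≤ M) :
    (N : ℝ) * ∑ α ∈ partCounts M N, esfWeight θ α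
      = θ * ∑ k ∈ range N, ∑ β ∈ partCounts M k, esfWeight θ β := by
  classical
  calc (N : ℝ) * ∑ α ∈ partCounts M N, esfWeight θ α
      = ∑ i : Fin M, ((i : ℕ) + 1 : ℝ) * ∑ α ∈ partCounts M N, esfWeight θ α * α i := by
        simp_rw [mul_sum]
        rw [sum_comm]
        refine sum_congr rfl fun α hα => ?_
        rw [← (mem_partCounts.mp hα), partSize, Nat.cast_sum, sum_mul]
        push_cast
        exact sum_congr rfl fun i _ => by ring
    _ = ∑ k ∈ range M, if k + 1 ≤ N then θ * ∑ β ∈ partCounts M (N - (k + 1)), esfWeight θ β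
          else 0 := by
        rw [← Fin.sum_univ_eq_sum_range (fun k => if k + 1 ≤ N then
          θ * ∑ β ∈ partCounts M (N - (k + 1)), esfWeight θ β else 0)]
        refine sum_congr rfl fun i _ => ?_
        rw [sum_esfWeight_mul_apply]
        split_ifs
        · field_simp
        · exact mul_zero _
    _ = ∑ k ∈ range N, θ * ∑ β ∈ partCounts M (N - 1 - k), esfWeight θ β := by
        rw [← sum_filter, show (range M).filter (· + 1 ≤ N) = range N by ext; simp; omega]
        exact sum_congr rfl fun k _ => by rw [Nat.sub_sub, add_comm 1 k]
    _ = θ * ∑ k ∈ range N, ∑ β ∈ partCounts M k, esfWeight θ β := by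
        rw [← mul_sum, sum_range_reflect (fun k => ∑ β ∈ partCounts M k, esfWeight θ β) N]

lemma mul_sum_prod_range_add_div_factorial (θ : ℝ) (N : ℕ) :
    θ * ∑ k ∈ range N, (∏ i ∈ range k, (θ + i)) / (k.factorial : ℝ)
      = N * ((∏ i ∈ range N, (θ + i)) / (N.factorial : ℝ)) := by
  induction N with
  | zero => simp
  | succ N ih =>
    rw [sum_range_succ, mul_add, ih, prod_range_succ, Nat.factorial_succ]
    push_cast
    field_simp
    ring

theorem sum_esfWeight_partCounts (θ : ℝ) {M N : ℕ} (hN : N ≤ M) :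
    ∑ α ∈ partCounts M N, esfWeight θ α = (∏ i ∈ range N, (θ + i)) / (N.factorial : ℝ) := by
  induction N using Nat.strong_induction_on with
  | _ N ih =>
    rcases N.eq_zero_or_pos with rfl | hpos
    · simp [partCounts_zero, esfWeight]
    · have h := natCast_mul_sum_esfWeight θ hN
      rw [sum_congr rfl fun k hk => ih k (mem_range.mp hk) ((mem_range.mp hk).le.trans hN),
        mul_sum_prod_range_add_div_factorial] at h
      exact mul_left_cancel₀ (by positivity) h

lemma Gamma_add_nat_eq_prod_mul {θ : ℝ} (hθ : 0 < θ) (k : ℕ) :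
    Real.Gamma (θ + k) = (∏ i ∈ range k, (θ + i)) * Real.Gamma θ := by
  induction k with
  | zero => simp
  | succ k ih =>
    rw [Nat.cast_succ, ← add_assoc, Real.Gamma_add_one (by positivity), ih, prod_range_succ]
    ring

lemma factorial_mul_Gamma_div_factorial_mul_Gamma {θ : ℝ} (hθ : 0 < θ) {n m : ℕ} (hmn : m ≤ n) :
    (n.factorial : ℝ) * Real.Gamma (θ + n - m) / ((n - m).factorial * Real.Gamma (θ + n))
      = n.factorial / (∏ i ∈ range n, (θ + i)) *
          ((∏ i ∈ range (n - m), (θ + i)) / (n - m).factorial) := by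
  have hcast : θ + (n : ℝ) - m = θ + ((n - m : ℕ) : ℝ) := by push_cast [hmn]; ring
  rw [hcast, Gamma_add_nat_eq_prod_mul hθ, Gamma_add_nat_eq_prod_mul hθ]
  have := (Real.Gamma_pos_of_pos hθ).ne'
  have : (0 : ℝ) < ∏ i ∈ range n, (θ + i) := by positivity
  field_simp

@[to_additive]
lemma prod_fin_eq_prod_Icc {M : Type*} [CommMonoid M] (n : ℕ) (g : ℕ → M) :
    ∏ i : Fin n, g ((i : ℕ) + 1) = ∏ j ∈ Icc 1 n, g j := by
  rw [Fin.prod_univ_eq_prod_range (fun k => g (k + 1)), ← Ico_add_one_right_eq_Icc,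
    prod_Ico_eq_prod_range]
  simp [add_comm]

@[to_additive]
lemma prod_Icc_eq_prod_fin {M : Type*} [CommMonoid M] (F : ℕ → ℕ → M) (hF : ∀ j, F j 0 = 1)
    {b n : ℕ} (r : ℕ → ℕ) (hr : ∀ j ∈ Icc 1 b, n < j → r j = 0) :
    ∏ j ∈ Icc 1 b, F j (r j)
      = ∏ i : Fin n, F ((i : ℕ) + 1) (if (i : ℕ) + 1 ≤ b then r ((i : ℕ) + 1) else 0) := by
  rw [prod_fin_eq_prod_Icc n (fun j => F j (if j ≤ b then r j else 0)),
    ← prod_subset (Icc_subset_Icc_right (min_le_left b n)), ← prod_subset (Icc_subset_Icc_right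
      (min_le_right b n))]
  · exact prod_congr rfl fun j hj => by rw [if_pos (by simp at hj; omega)]
  · intro j hj hj'
    simp only [mem_Icc] at hj hj'
    rw [if_neg (by omega), hF]
  · intro j hj hj'
    simp only [mem_Icc] at hj hj'
    rw [hr j (mem_Icc.mpr hj) (by omega), hF]

lemma extendCounts_succ {n : ℕ} (α : Fin n → ℕ) (i : Fin n) :
    extendCounts n α ((i : ℕ) + 1) = α i := by
  rw [extendCounts, dif_pos ⟨by omega, by omega⟩]
  rfl

lemma extendCounts_of_lt {n : ℕ} (α : Fin n → ℕ) {j : ℕ} (hj : n < j) :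
    extendCounts n α j = 0 := by
  rw [extendCounts, dif_neg (by omega)]

end ESF

open ESF

theorem stmt_14_general (n : ℕ) (b : ℕ) (θ : ℝ) (hθ : 0 < θ)
    (r : ℕ → ℕ) (m : ℕ) (hm : m = ∑ j ∈ Finset.Icc 1 b, j * r j) :
    ∑ α ∈ esfTuples n,
        pE θ α * ∏ j ∈ Finset.Icc 1 b, (Nat.descFactorial (extendCounts n α j) (r j) : ℝ)
      = (if m ≤ n then
            (Nat.factorial n : ℝ) * Real.Gamma (θ + n - m) /
              ((Nat.factorial (n - m) : ℝ) * Real.Gamma (θ + n))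
          else 0) *
        ∏ j ∈ Finset.Icc 1 b, (θ / j) ^ (r j) := by
  by_cases hr : ∀ j ∈ Icc 1 b, n < j → r j = 0
  · set ρ : Fin n → ℕ := fun i => if (i : ℕ) + 1 ≤ b then r ((i : ℕ) + 1) else 0
    have hmρ : m = partSize ρ :=
      hm.trans (sum_Icc_eq_sum_fin (fun j k => j * k) (fun _ => rfl) r hr)
    have hdesc : ∀ α : Fin n → ℕ, ∏ j ∈ Icc 1 b, ((extendCounts n α j).descFactorial (r j) : ℝ)
        = ∏ i, ((α i).descFactorial (ρ i) : ℝ) := fun α => by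
      simp only [prod_Icc_eq_prod_fin (fun j k => ((extendCounts n α j).descFactorial k : ℝ))
        (fun _ => by simp) r hr, extendCounts_succ, ρ]
    have hpow : ∏ j ∈ Icc 1 b, (θ / j) ^ (r j) = ∏ i : Fin n, (θ / ((i : ℕ) + 1)) ^ (ρ i) := by
      rw [prod_Icc_eq_prod_fin (fun j k => (θ / j) ^ k) (fun _ => pow_zero _) r hr]
      push_cast
      rfl
    simp only [pE_eq_mul_esfWeight, hdesc, mul_assoc, ← mul_sum]
    rw [esfTuples_eq_partCounts, sum_esfWeight_mul_prod_descFactorial, ← hmρ, hpow]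
    split_ifs with hmn
    · rw [sum_esfWeight_partCounts θ (Nat.sub_le n m),
        factorial_mul_Gamma_div_factorial_mul_Gamma hθ hmn]
      ring
    · simp
  · push Not at hr
    obtain ⟨j, hj, hnj, hrj⟩ := hr
    have hjm : j ≤ m := (Nat.le_mul_of_pos_right _ (Nat.pos_of_ne_zero hrj)).trans
      (hm ▸ single_le_sum (f := fun j => j * r j) (fun _ _ => Nat.zero_le _) hj)
    rw [if_neg (by omega), zero_mul]
    refine sum_eq_zero fun α _ => ?_
    rw [prod_eq_zero hj (by simp [extendCounts_of_lt α hnj, Nat.descFactorial_of_lt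
      (Nat.pos_of_ne_zero hrj)]), mul_zero]

/-- Joint falling factorial moments of the Ewens Sampling Formula (Watterson):
`E ∏_{j=1}^b (α_j)_{[r_j]}
  = 1{m ≤ n} (n! Γ(θ+n-m))/((n-m)! Γ(θ+n)) ∏_{j=1}^b (θ/j)^{r_j}` with `m = ∑ j r_j`. -/
theorem stmt_14 (n : ℕ) (hn : 1 ≤ n) (b : ℕ) (hb : 1 ≤ b) (θ : ℝ) (hθ : 0 < θ)
    (r : ℕ → ℕ) (m : ℕ) (hm : m = ∑ j ∈ Finset.Icc 1 b, j * r j) :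
    ∑ α ∈ esfTuples n,
        pE θ α * ∏ j ∈ Finset.Icc 1 b, (Nat.descFactorial (extendCounts n α j) (r j) : ℝ)
      = (if m ≤ n then
            (Nat.factorial n : ℝ) * Real.Gamma (θ + n - m) /
              ((Nat.factorial (n - m) : ℝ) * Real.Gamma (θ + n))
          else 0) *
        ∏ j ∈ Finset.Icc 1 b, (θ / j) ^ (r j) :=
  stmt_14_general n b θ hθ r m hm
end

section
/- Let $\theta > 0$ be real, let $k \ge 1$ be an integer, and let $(n_1, \ldots, n_k)$ be positive integers with $n = n_1 + \cdots + n_k \ge 2$. Define $p(n_1,\ldots,n_k) = \frac{n!}{n_1 n_2 \cdots n_k} \cdot \frac{\theta^{k}}{\theta^{(n)}}$, where $\theta^{(n)} = \theta(\theta+1)\cdots(\theta+n-1)$. Then $p(n_1,\ldots,n_k) = \frac{1}{n+\theta-1} \sum_{j:\, n_j \ge 2} (n_j - 1)\, p(n_1,\ldots,n_j-1,\ldots,n_k) \; + \; \frac{\theta}{n(n+\theta-1)} \Big[ \sum_{\substack{i \ne l \\ n_i = 1}} (n_l + 1)\, p(\sigma_{i,l}(n_1,\ldots,n_k)) \; +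 \; \#\{i : n_i = 1\} \cdot p(n_1,\ldots,n_k) \Big]$, where $\sigma_{i,l}(n_1,\ldots,n_k)$ denotes the tuple of $k-1$ positive integers obtained from $(n_1,\ldots,n_k)$ by deleting the $i$-th entry and increasing the $l$-th entry by $1$. -/
open Finset

/-- The labelled Ewens Sampling Formula: the probability of a labelled haplotype
configuration `(n_1, …, n_k)` is `p(n_1,…,n_k) = (n!/(n_1 ⋯ n_k)) θ^k / θ^{(n)}`,
where `n = n_1 + ⋯ + n_k`. -/
noncomputable def pLab (θ : ℝ) {k : ℕ} (ns : Fin k → ℕ) : ℝ :=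
  (Nat.factorial (∑ i, ns i) : ℝ) / (∏ i, (ns i : ℝ)) *
    (θ ^ k / ∏ i ∈ Finset.range (∑ i, ns i), (θ + i))

private lemma qpos (θ : ℝ) (hθ : 0 < θ) (n : ℕ) : (0:ℝ) < ∏ i ∈ Finset.range n, (θ + i) :=
  Finset.prod_pos fun i _ => by positivity

/-- Coalescence term identity. -/
private lemma coalesce (θ : ℝ) (hθ : 0 < θ) {k : ℕ} (ns : Fin (k+1) → ℕ)
    (hpos : ∀ i, 1 ≤ ns i) (n : ℕ) (hn : n = ∑ i, ns i) (hn2 : 2 ≤ n)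
    (j : Fin (k+1)) (hj : 2 ≤ ns j) :
    ((ns j : ℝ) - 1) * pLab θ (Function.update ns j (ns j - 1))
      = pLab θ ns * (ns j) * (((n:ℝ) + θ - 1) / n) := by
  have hsplit : n = ns j + ∑ x ∈ univ \ {j}, ns x := by
    rw [hn, Finset.sum_eq_sum_sdiff_singleton_add (mem_univ j) ns]; ring
  have hsum : ∑ i, Function.update ns j (ns j - 1) i = n - 1 := by
    rw [Finset.sum_update_of_mem (mem_univ j)]
    omega
  have hprodm : ∏ i, ((Function.update ns j (ns j - 1) i : ℕ) : ℝ)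
      = ((ns j : ℝ) - 1) * ∏ x ∈ univ \ {j}, (ns x : ℝ) := by
    rw [← Nat.cast_prod, Finset.prod_update_of_mem (mem_univ j), Nat.cast_mul,
      Nat.cast_prod, Nat.cast_sub (by omega), Nat.cast_one]
  have hprodn : ∏ i, ((ns i : ℕ) : ℝ) = (ns j : ℝ) * ∏ x ∈ univ \ {j}, (ns x : ℝ) := by
    rw [← Nat.cast_prod, Finset.prod_eq_prod_diff_singleton_mul (mem_univ j),
      Nat.cast_mul, Nat.cast_prod]; ring
  have hfac : (Nat.factorial n : ℝ) = (n : ℝ) * (Nat.factorial (n-1) : ℝ) := by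
    have : n = (n-1) + 1 := by omega
    rw [this, Nat.factorial_succ]; push_cast; ring
  have hQ : ∏ i ∈ Finset.range n, (θ + i)
      = (∏ i ∈ Finset.range (n-1), (θ + i)) * (θ + ((n:ℝ) - 1)) := by
    have h1 : n = (n-1) + 1 := by omega
    rw [h1, Finset.prod_range_succ]
    have : (((n-1 : ℕ)) : ℝ) = (n : ℝ) - 1 := by
      rw [Nat.cast_sub (by omega), Nat.cast_one]
    rw [← h1, this]
  have hE : (0:ℝ) < ∏ x ∈ univ \ {j}, (ns x : ℝ) :=
    Finset.prod_pos fun x _ => by exact_mod_cast hpos x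
  have hQ' : (0:ℝ) < ∏ i ∈ Finset.range (n-1), (θ + i) := qpos θ hθ _
  have hnsj : (1:ℝ) < (ns j : ℝ) := by exact_mod_cast hj
  have hn0 : (0:ℝ) < (n:ℝ) := by exact_mod_cast (by omega : 0 < n)
  unfold pLab
  rw [hsum, hprodm, ← hn, hprodn, hfac, hQ]
  have h1 : (ns j : ℝ) - 1 ≠ 0 := by linarith
  have h2 : (∏ x ∈ univ \ {j}, (ns x : ℝ)) ≠ 0 := ne_of_gt hE
  have h3 : (∏ i ∈ Finset.range (n-1), (θ + i)) ≠ 0 := ne_of_gt hQ'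
  have h4 : (n:ℝ) ≠ 0 := ne_of_gt hn0
  have h5 : (ns j : ℝ) ≠ 0 := by linarith
  have hn2' : (2:ℝ) ≤ (n:ℝ) := by exact_mod_cast hn2
  have h6 : θ + ((n:ℝ) - 1) ≠ 0 := by linarith
  field_simp
  ring

/-- Mutation term identity. -/
private lemma mutate (θ : ℝ) (hθ : 0 < θ) {k : ℕ} (ns : Fin (k+1) → ℕ)
    (hpos : ∀ i, 1 ≤ ns i) (n : ℕ) (hn : n = ∑ i, ns i)
    (i l : Fin (k+1)) (hi : ns i = 1) (hl : l ≠ i) :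
    ((ns l : ℝ) + 1) * pLab θ (fun m : Fin k => Function.update ns l (ns l + 1) (i.succAbove m))
      = pLab θ ns * (ns l) / θ := by
  set g : Fin (k+1) → ℕ := Function.update ns l (ns l + 1) with hg
  have hgi : g i = 1 := by rw [hg, Function.update_of_ne (Ne.symm hl), hi]
  have hgsum : ∑ x, g x = n + 1 := by
    rw [hg, Finset.sum_update_of_mem (mem_univ l)]
    have := Finset.sum_eq_sum_sdiff_singleton_add (mem_univ l) ns
    omega
  have hsum : ∑ m, g (i.succAbove m) = n := by
    have := Fin.sum_univ_succAbove g i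
    omega
  have hprodσ : ∏ m, ((g (i.succAbove m) : ℕ) : ℝ)
      = ((ns l : ℝ) + 1) * ∏ x ∈ univ \ {l}, (ns x : ℝ) := by
    have h1 : ∏ x, g x = g i * ∏ m, g (i.succAbove m) := Fin.prod_univ_succAbove g i
    have h2 : ∏ x, g x = (ns l + 1) * ∏ x ∈ univ \ {l}, ns x := by
      rw [hg, Finset.prod_update_of_mem (mem_univ l)]
    rw [hgi, one_mul] at h1
    rw [← Nat.cast_prod, ← h1, h2]; push_cast; ring
  have hprodn : ∏ x, ((ns x : ℕ) : ℝ) = (ns l : ℝ) * ∏ x ∈ univ \ {l}, (ns x : ℝ) := by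
    rw [← Nat.cast_prod, Finset.prod_eq_prod_diff_singleton_mul (mem_univ l),
      Nat.cast_mul, Nat.cast_prod]; ring
  have hE : (0:ℝ) < ∏ x ∈ univ \ {l}, (ns x : ℝ) :=
    Finset.prod_pos fun x _ => by exact_mod_cast hpos x
  have hQ : (0:ℝ) < ∏ i ∈ Finset.range n, (θ + i) := qpos θ hθ _
  have hnsl : (0:ℝ) < (ns l : ℝ) := by exact_mod_cast hpos l
  unfold pLab
  rw [hsum, hprodσ, ← hn, hprodn]
  have h1 : ((ns l : ℝ) + 1) ≠ 0 := by linarith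
  have h2 : (∏ x ∈ univ \ {l}, (ns x : ℝ)) ≠ 0 := ne_of_gt hE
  have h3 : (∏ i ∈ Finset.range n, (θ + i)) ≠ 0 := ne_of_gt hQ
  have h4 : (ns l : ℝ) ≠ 0 := ne_of_gt hnsl
  field_simp
  ring

/-- Recursion for the labelled Ewens Sampling Formula with the number of mutations:
for a tuple `(n_1,…,n_{k+1})` of positive integers summing to `n ≥ 2`,
`p(n) = (1/(n+θ-1)) ∑_{j : n_j ≥ 2} (n_j-1) p(…,n_j-1,…)
  + (θ/(n(n+θ-1))) [ ∑_{i ≠ l, n_i = 1} (n_l+1) p(σ_{i,l}(n)) + #{i : n_i = 1} p(n) ]`,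
where `σ_{i,l}` deletes entry `i` and increments entry `l`. -/
theorem stmt_18 (θ : ℝ) (hθ : 0 < θ) (k : ℕ) (ns : Fin (k + 1) → ℕ)
    (hpos : ∀ i, 1 ≤ ns i) (n : ℕ) (hn : n = ∑ i, ns i) (hn2 : 2 ≤ n) :
    pLab θ ns
      = (1 / ((n : ℝ) + θ - 1)) *
          (∑ j ∈ Finset.univ.filter (fun j => 2 ≤ ns j),
            ((ns j : ℝ) - 1) * pLab θ (Function.update ns j (ns j - 1)))
        + θ / ((n : ℝ) * ((n : ℝ) + θ - 1)) *
            ((∑ i ∈ Finset.univ.filter (fun i => ns i = 1),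
                ∑ l ∈ Finset.univ.filter (fun l => l ≠ i),
                  ((ns l : ℝ) + 1) *
                    pLab θ (fun m : Fin k => Function.update ns l (ns l + 1) (i.succAbove m)))
              + ((Finset.univ.filter (fun i => ns i = 1)).card : ℝ) * pLab θ ns) := by
  set p := pLab θ ns with hp
  set s : ℕ := (Finset.univ.filter (fun i => ns i = 1)).card with hs
  -- first sum
  have hsum1 : ∑ j ∈ Finset.univ.filter (fun j => 2 ≤ ns j),
      ((ns j : ℝ) - 1) * pLab θ (Function.update ns j (ns j - 1))
      = p * (((n:ℝ) + θ - 1) / n) * ((n : ℝ) - s) := by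
    rw [Finset.sum_congr rfl (fun j hj => coalesce θ hθ ns hpos n hn hn2 j
      (by simpa using hj))]
    have hfil : Finset.univ.filter (fun j => 2 ≤ ns j)
        = Finset.univ.filter (fun j => ¬ ns j = 1) := by
      apply Finset.filter_congr
      intro j _
      have := hpos j
      omega
    have hsplit : (∑ j ∈ Finset.univ.filter (fun j => ns j = 1), (ns j : ℝ))
        + (∑ j ∈ Finset.univ.filter (fun j => ¬ ns j = 1), (ns j : ℝ)) = (n : ℝ) := by
      rw [Finset.sum_filter_add_sum_filter_not, hn]; push_cast; ring
    have hsing : (∑ j ∈ Finset.univ.filter (fun j => ns j = 1), (ns j : ℝ)) = (s : ℝ) := by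
      rw [hs, Finset.card_eq_sum_ones]
      push_cast
      exact Finset.sum_congr rfl fun j hj => by simp_all
    have hT : (∑ j ∈ Finset.univ.filter (fun j => 2 ≤ ns j), (ns j : ℝ)) = (n : ℝ) - s := by
      rw [hfil]; linarith
    calc ∑ j ∈ Finset.univ.filter (fun j => 2 ≤ ns j), p * (ns j : ℝ) * (((n:ℝ) + θ - 1) / n)
        = (∑ j ∈ Finset.univ.filter (fun j => 2 ≤ ns j), (ns j : ℝ)) * (p * (((n:ℝ) + θ - 1) / n)) := by
          rw [Finset.sum_mul]
          exact Finset.sum_congr rfl fun j _ => by ring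
      _ = p * (((n:ℝ) + θ - 1) / n) * ((n : ℝ) - s) := by rw [hT]; ring
  -- inner mutation sum
  have hinner : ∀ i ∈ Finset.univ.filter (fun i => ns i = 1),
      (∑ l ∈ Finset.univ.filter (fun l => l ≠ i),
        ((ns l : ℝ) + 1) *
          pLab θ (fun m : Fin k => Function.update ns l (ns l + 1) (i.succAbove m)))
      = p * ((n : ℝ) - 1) / θ := by
    intro i hi
    have hi1 : ns i = 1 := by simpa using hi
    rw [Finset.sum_congr rfl (fun l hl => mutate θ hθ ns hpos n hn i l hi1 (by simpa using hl))]
    have herase : (∑ l ∈ Finset.univ.filter (fun l => l ≠ i), (ns l : ℝ)) = (n : ℝ) - 1 := by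
      rw [Finset.filter_ne' univ i]
      have h1 : (∑ l, (ns l : ℝ)) = (ns i : ℝ) + ∑ l ∈ univ.erase i, (ns l : ℝ) :=
        (Finset.add_sum_erase univ _ (mem_univ i)).symm
      have h2 : (∑ l, (ns l : ℝ)) = (n : ℝ) := by rw [hn]; push_cast; ring
      rw [hi1] at h1; push_cast at h1; linarith
    calc ∑ l ∈ Finset.univ.filter (fun l => l ≠ i), p * (ns l : ℝ) / θ
        = (∑ l ∈ Finset.univ.filter (fun l => l ≠ i), (ns l : ℝ)) * (p / θ) := by
          rw [Finset.sum_mul]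
          exact Finset.sum_congr rfl fun l _ => by ring
      _ = p * ((n : ℝ) - 1) / θ := by rw [herase]; ring
  have hsum2 : (∑ i ∈ Finset.univ.filter (fun i => ns i = 1),
      ∑ l ∈ Finset.univ.filter (fun l => l ≠ i),
        ((ns l : ℝ) + 1) *
          pLab θ (fun m : Fin k => Function.update ns l (ns l + 1) (i.succAbove m)))
      = (s : ℝ) * (p * ((n : ℝ) - 1) / θ) := by
    rw [Finset.sum_congr rfl hinner, Finset.sum_const, hs, nsmul_eq_mul]
  rw [hsum1, hsum2]
  have hn0 : (0:ℝ) < (n:ℝ) := by exact_mod_cast (by omega : 0 < n)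
  have hden : (0:ℝ) < (n:ℝ) + θ - 1 := by
    have : (2:ℝ) ≤ (n:ℝ) := by exact_mod_cast hn2
    linarith
  have h4 : (n:ℝ) ≠ 0 := ne_of_gt hn0
  have h5 : (n:ℝ) + θ - 1 ≠ 0 := ne_of_gt hden
  have h6 : θ ≠ 0 := ne_of_gt hθ
  field_simp
  ring
end
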